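/- arXiv:2104.13890 — 8 statements merged into one kernel-verified Lean document; each statement's English description precedes it below -/
import Mathlib

section
/- Let Gᵢ act on compact metrizable spaces Xᵢ with continuous 1-cocycles Ωᵢ : Gᵢ × Xᵢ → ℝ for i = 1, 2, and form the product action of G₁ × G₂ on X₁ × X₂ with cocycle Ω((g₁,g₂),(x₁,x₂)) = Ω₁(g₁,x₁) + Ω₂(g₂,x₂). If there exists a unique e^{β·Ω₁}-conformal probability measure ν on X₁, then every e^{β·Ω}-conformal probability measure on X₁ × X₂ is of the form ν × μ for a unique e^{β·Ω₂}-conformal probability measure μ on X₂, and conversely every such product measure ν × μ is e^{β·Ω}-conformal. -/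
open MeasureTheory

/-- A Borel probability measure `m` is `e^{β·Ω}`-conformal for the action of `G` on `X`. -/
def ConformalMeasure {G X : Type*} [Group G] [TopologicalSpace X] [MeasurableSpace X]
    [MulAction G X] (Ω : G → X → ℝ) (β : ℝ) (m : Measure X) : Prop :=
  ∀ g : G, ∀ f : C(X, ℝ),
    ∫ x, f (g • x) * Real.exp (β * Ω g x) ∂m = ∫ x, f x ∂m

/-- Conformality for the product action of `G₁ × G₂` on `X₁ × X₂` with cocycle
`Ω((g₁,g₂),(x₁,x₂)) = Ω₁(g₁,x₁) + Ω₂(g₂,x₂)`. -/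
def ConformalProd {G₁ G₂ X₁ X₂ : Type*} [Group G₁] [Group G₂]
    [TopologicalSpace X₁] [MeasurableSpace X₁] [TopologicalSpace X₂] [MeasurableSpace X₂]
    [MulAction G₁ X₁] [MulAction G₂ X₂]
    (Ω₁ : G₁ → X₁ → ℝ) (Ω₂ : G₂ → X₂ → ℝ) (β : ℝ) (η : Measure (X₁ × X₂)) : Prop :=
  ∀ (g₁ : G₁) (g₂ : G₂), ∀ f : C(X₁ × X₂, ℝ),
    ∫ p, f (g₁ • p.1, g₂ • p.2) * Real.exp (β * (Ω₁ g₁ p.1 + Ω₂ g₂ p.2)) ∂η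
      = ∫ p, f p ∂η

open Set
open scoped NNReal ENNReal BoundedContinuousFunction

/-!
Testing the product conformality with `g₂ = 1` shows that, for every bounded continuous
`w ≥ 0` on `X₂`, the first marginal of `w(x₂) dη` is a finite `e^{β·Ω₁}`-conformal measure, hence,
by uniqueness, its total mass times `ν`. So `∫ f(x₁) w(x₂) dη = ∫ f dν · ∫ w d(η.snd)`, and since
a finite measure on a product is determined by such integrals, `η = ν × η.snd`; testing with
`g₁ = 1` shows that `η.snd` is conformal. The converse direction is Fubini.
-/

lemma cocycle_one_eq_zero {G X : Type*} [Group G] [MulAction G X] {Ω : G → X → ℝ}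
    (hΩ : ∀ (g h : G) (x : X), Ω g (h • x) + Ω h x = Ω (g * h) x) (x : X) : Ω 1 x = 0 := by
  simpa using hΩ 1 1 x

namespace ConformalMeasure

variable {G X : Type*} [Group G] [TopologicalSpace X] [MeasurableSpace X] [MulAction G X]
  {Ω : G → X → ℝ} {β : ℝ} {m ν : Measure X}

lemma smul (hm : ConformalMeasure Ω β m) (c : ℝ≥0∞) : ConformalMeasure Ω β (c • m) := by
  intro g f
  simp only [integral_smul_measure, hm g f]

lemma eq_measure_univ_smul [IsFiniteMeasure m] (hm : ConformalMeasure Ω β m)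
    (huniq : ∀ ν' : Measure X, IsProbabilityMeasure ν' → ConformalMeasure Ω β ν' → ν' = ν) :
    m = m univ • ν := by
  rcases eq_zero_or_neZero m with rfl | _
  · simp
  rw [← huniq _ inferInstance (hm.smul (m univ)⁻¹), smul_smul,
    ENNReal.mul_inv_cancel (NeZero.ne _) (measure_ne_top _ _), one_smul]

end ConformalMeasure

lemma integral_fst_withDensity {X₁ X₂ : Type*} [MeasurableSpace X₁] [MeasurableSpace X₂]
    {η : Measure (X₁ × X₂)} {w : X₁ × X₂ → ℝ≥0} (hw : Measurable w) {h : X₁ → ℝ}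
    (hh : Measurable h) :
    ∫ x, h x ∂(η.withDensity fun p => (w p : ℝ≥0∞)).fst = ∫ p, w p * h p.1 ∂η := by
  rw [Measure.fst, integral_map measurable_fst.aemeasurable hh.aestronglyMeasurable,
    integral_withDensity_eq_integral_smul hw]
  rfl

lemma integral_snd {X₁ X₂ : Type*} [MeasurableSpace X₁] [MeasurableSpace X₂]
    {η : Measure (X₁ × X₂)} {h : X₂ → ℝ} (hh : Measurable h) :
    ∫ y, h y ∂η.snd = ∫ p, h p.2 ∂η :=
  integral_map measurable_snd.aemeasurable hh.aestronglyMeasurable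

namespace ConformalProd

variable {G₁ G₂ X₁ X₂ : Type*} [Group G₁] [Group G₂]
  [TopologicalSpace X₁] [MeasurableSpace X₁] [TopologicalSpace X₂] [MeasurableSpace X₂]
  [MulAction G₁ X₁] [MulAction G₂ X₂] {Ω₁ : G₁ → X₁ → ℝ} {Ω₂ : G₂ → X₂ → ℝ} {β : ℝ}
  {η : Measure (X₁ × X₂)}

lemma conformalMeasure_snd [OpensMeasurableSpace X₂] [ContinuousConstSMul G₂ X₂]
    (hη : ConformalProd Ω₁ Ω₂ β η) (hΩ₁ : ∀ x, Ω₁ 1 x = 0) (hΩ₂cont : ∀ g, Continuous (Ω₂ g)) :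
    ConformalMeasure Ω₂ β η.snd := by
  intro g f
  rw [integral_snd (by fun_prop), integral_snd f.continuous.measurable]
  simpa [hΩ₁] using hη 1 g (f.comp ⟨Prod.snd, continuous_snd⟩)

lemma conformalMeasure_fst_withDensity [OpensMeasurableSpace X₁] [OpensMeasurableSpace X₂]
    [ContinuousConstSMul G₁ X₁]
    (hη : ConformalProd Ω₁ Ω₂ β η) (hΩ₂ : ∀ y, Ω₂ 1 y = 0) (hΩ₁cont : ∀ g, Continuous (Ω₁ g))
    (w : C(X₂, ℝ≥0)) :
    ConformalMeasure Ω₁ β (η.withDensity fun p => (w p.2 : ℝ≥0∞)).fst := by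
  intro g f
  have hw : Measurable fun p : X₁ × X₂ => w p.2 := w.continuous.measurable.comp measurable_snd
  rw [integral_fst_withDensity hw (by fun_prop),
    integral_fst_withDensity hw f.continuous.measurable]
  have := hη g 1 ⟨fun p => f p.1 * w p.2, by fun_prop⟩
  simp only [ContinuousMap.coe_mk, one_smul, hΩ₂, add_zero] at this
  refine (integral_congr_ae ?_).trans (this.trans (integral_congr_ae ?_)) <;>
    exact .of_forall fun p => by ring

variable {ν : Measure X₁}

lemma integral_mul_nnreal_eq [OpensMeasurableSpace X₁] [OpensMeasurableSpace X₂]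
    [ContinuousConstSMul G₁ X₁] [IsFiniteMeasure η]
    (hη : ConformalProd Ω₁ Ω₂ β η) (hΩ₂ : ∀ y, Ω₂ 1 y = 0) (hΩ₁cont : ∀ g, Continuous (Ω₁ g))
    (huniq : ∀ ν' : Measure X₁, IsProbabilityMeasure ν' → ConformalMeasure Ω₁ β ν' → ν' = ν)
    (f : X₁ →ᵇ ℝ) (w : X₂ →ᵇ ℝ≥0) :
    ∫ p, f p.1 * w p.2 ∂η = (∫ x, f x ∂ν) * ∫ y, (w y : ℝ) ∂η.snd := by
  set m := (η.withDensity fun p => (w p.2 : ℝ≥0∞)).fst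
  have hw : Measurable fun p : X₁ × X₂ => w p.2 := w.continuous.measurable.comp measurable_snd
  have hm_int (h : X₁ → ℝ) (hh : Measurable h) : ∫ x, h x ∂m = ∫ p, w p.2 * h p.1 ∂η :=
    integral_fst_withDensity hw hh
  have : IsFiniteMeasure (η.withDensity fun p => (w p.2 : ℝ≥0∞)) :=
    isFiniteMeasure_withDensity (BoundedContinuousFunction.lintegral_lt_top_of_nnreal η
      (w.compContinuous ⟨Prod.snd, continuous_snd⟩)).ne
  have hm : m = m univ • ν :=
    (hη.conformalMeasure_fst_withDensity hΩ₂ hΩ₁cont w.toContinuousMap).eq_measure_univ_smul huniq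
  have hmass : m.real univ = ∫ y, (w y : ℝ) ∂η.snd := by
    rw [integral_snd (by fun_prop)]
    simpa using hm_int 1 measurable_const
  calc ∫ p, f p.1 * w p.2 ∂η = ∫ x, f x ∂m := by
        rw [hm_int f f.continuous.measurable]; simp only [mul_comm]
    _ = m.real univ * ∫ x, f x ∂ν := by
        conv_lhs => rw [hm]
        rw [integral_smul_measure, smul_eq_mul]
        rfl
    _ = _ := by rw [hmass, mul_comm]

lemma integral_mul_eq [OpensMeasurableSpace X₁] [OpensMeasurableSpace X₂]
    [ContinuousConstSMul G₁ X₁] [IsFiniteMeasure η]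
    (hη : ConformalProd Ω₁ Ω₂ β η) (hΩ₂ : ∀ y, Ω₂ 1 y = 0) (hΩ₁cont : ∀ g, Continuous (Ω₁ g))
    (huniq : ∀ ν' : Measure X₁, IsProbabilityMeasure ν' → ConformalMeasure Ω₁ β ν' → ν' = ν)
    (f : X₁ →ᵇ ℝ) (g : X₂ →ᵇ ℝ) :
    ∫ p, f p.1 * g p.2 ∂η = (∫ x, f x ∂ν) * ∫ y, g y ∂η.snd := by
  have hint (w : X₂ →ᵇ ℝ≥0) : Integrable (fun p : X₁ × X₂ => f p.1 * w p.2) η :=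
    ((BoundedContinuousFunction.integrable_of_nnreal η.snd w).comp_measurable
      measurable_snd).bdd_mul (f.continuous.measurable.comp measurable_fst).aestronglyMeasurable
      (ae_of_all _ fun p => f.norm_coe_le_norm p.1)
  rw [BoundedContinuousFunction.integral_eq_integral_nnrealPart_sub η.snd g]
  simp only [g.self_eq_nnrealPart_sub_nnrealPart_neg, Pi.sub_apply, Function.comp_apply, mul_sub]
  rw [integral_sub (hint _) (hint _), integral_mul_nnreal_eq hη hΩ₂ hΩ₁cont huniq,
    integral_mul_nnreal_eq hη hΩ₂ hΩ₁cont huniq]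

lemma eq_prod_snd [BorelSpace X₁] [BorelSpace X₂] [HasOuterApproxClosed X₁]
    [HasOuterApproxClosed X₂] [ContinuousConstSMul G₁ X₁] [IsFiniteMeasure η] [IsFiniteMeasure ν]
    (hη : ConformalProd Ω₁ Ω₂ β η) (hΩ₂ : ∀ y, Ω₂ 1 y = 0) (hΩ₁cont : ∀ g, Continuous (Ω₁ g))
    (huniq : ∀ ν' : Measure X₁, IsProbabilityMeasure ν' → ConformalMeasure Ω₁ β ν' → ν' = ν) :
    η = ν.prod η.snd :=
  Measure.eq_prod_of_integral_mul_boundedContinuousFunction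
    (hη.integral_mul_eq hΩ₂ hΩ₁cont huniq)

end ConformalProd

lemma ConformalMeasure.prod {G₁ G₂ X₁ X₂ : Type*} [Group G₁] [Group G₂]
    [TopologicalSpace X₁] [MeasurableSpace X₁] [TopologicalSpace X₂] [MeasurableSpace X₂]
    [CompactSpace X₁] [CompactSpace X₂] [TopologicalSpace.PseudoMetrizableSpace X₁]
    [OpensMeasurableSpace X₁] [OpensMeasurableSpace X₂]
    [MulAction G₁ X₁] [MulAction G₂ X₂] [ContinuousConstSMul G₁ X₁] [ContinuousConstSMul G₂ X₂]
    {Ω₁ : G₁ → X₁ → ℝ} {Ω₂ : G₂ → X₂ → ℝ} {β : ℝ} {ν : Measure X₁} {μ : Measure X₂}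
    [IsFiniteMeasure ν] [IsFiniteMeasure μ]
    (hΩ₁cont : ∀ g, Continuous (Ω₁ g)) (hΩ₂cont : ∀ g, Continuous (Ω₂ g))
    (hν : ConformalMeasure Ω₁ β ν) (hμ : ConformalMeasure Ω₂ β μ) :
    ConformalProd Ω₁ Ω₂ β (ν.prod μ) := by
  intro g₁ g₂ f
  let K : C(X₁, ℝ) := ⟨fun x => ∫ y, f (x, y) ∂μ, by
    simpa using continuous_parametric_integral_of_continuous (μ := μ)
      (f := fun x y => f (x, y)) f.continuous isCompact_univ⟩
  have inner (x : X₁) : ∫ y, f (g₁ • x, g₂ • y) * Real.exp (β * (Ω₁ g₁ x + Ω₂ g₂ y)) ∂μ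
      = K (g₁ • x) * Real.exp (β * Ω₁ g₁ x) := by
    have := hμ g₂ ⟨fun y => f (g₁ • x, y), by fun_prop⟩
    simp only [ContinuousMap.coe_mk] at this
    calc _ = ∫ y, Real.exp (β * Ω₁ g₁ x) * (f (g₁ • x, g₂ • y) * Real.exp (β * Ω₂ g₂ y)) ∂μ := by
          congr 1 with y
          rw [mul_add, Real.exp_add]
          ring
      _ = _ := by rw [integral_const_mul, this, mul_comm]; rfl
  have hint {F : X₁ × X₂ → ℝ} (hF : Continuous F) : Integrable F (ν.prod μ) :=
    hF.integrable_of_hasCompactSupport (.of_compactSpace F)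
  rw [integral_prod _ (hint (by fun_prop)), integral_prod _ (hint f.continuous)]
  simp only [inner]
  exact hν g₁ K

theorem conformal_prod_measure_general
    {G₁ G₂ X₁ X₂ : Type*} [Group G₁] [Group G₂]
    [TopologicalSpace X₁] [CompactSpace X₁] [TopologicalSpace.MetrizableSpace X₁]
    [MeasurableSpace X₁] [BorelSpace X₁]
    [TopologicalSpace X₂] [CompactSpace X₂] [TopologicalSpace.MetrizableSpace X₂]
    [MeasurableSpace X₂] [BorelSpace X₂]
    [MulAction G₁ X₁] [ContinuousConstSMul G₁ X₁]
    [MulAction G₂ X₂] [ContinuousConstSMul G₂ X₂]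
    (Ω₁ : G₁ → X₁ → ℝ) (hΩ₁cont : ∀ g, Continuous (Ω₁ g))
    (hΩ₁ : ∀ (g h : G₁) (x : X₁), Ω₁ g (h • x) + Ω₁ h x = Ω₁ (g * h) x)
    (Ω₂ : G₂ → X₂ → ℝ) (hΩ₂cont : ∀ g, Continuous (Ω₂ g))
    (hΩ₂ : ∀ (g h : G₂) (x : X₂), Ω₂ g (h • x) + Ω₂ h x = Ω₂ (g * h) x)
    (β : ℝ) (ν : Measure X₁) [IsProbabilityMeasure ν]
    (hν : ConformalMeasure Ω₁ β ν)
    (hνuniq : ∀ ν' : Measure X₁, IsProbabilityMeasure ν' → ConformalMeasure Ω₁ β ν' → ν' = ν) :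
    (∀ μ : Measure X₂, IsProbabilityMeasure μ → ConformalMeasure Ω₂ β μ →
      ConformalProd Ω₁ Ω₂ β (ν.prod μ)) ∧
    (∀ η : Measure (X₁ × X₂), IsProbabilityMeasure η → ConformalProd Ω₁ Ω₂ β η →
      ∃! μ : Measure X₂,
        IsProbabilityMeasure μ ∧ ConformalMeasure Ω₂ β μ ∧ η = ν.prod μ) := by
  refine ⟨fun μ _ hμ => hν.prod hΩ₁cont hΩ₂cont hμ, fun η _ hη => ?_⟩
  have hsnd := hη.conformalMeasure_snd (cocycle_one_eq_zero hΩ₁) hΩ₂cont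
  have hprod := hη.eq_prod_snd (cocycle_one_eq_zero hΩ₂) hΩ₁cont hνuniq
  refine ⟨η.snd, ⟨inferInstance, hsnd, hprod⟩, ?_⟩
  rintro μ ⟨_, -, rfl⟩
  exact Measure.snd_prod.symm

/-- If there is a unique `e^{β·Ω₁}`-conformal probability measure `ν` on
`X₁`, then the `e^{β·Ω}`-conformal probability measures on `X₁ × X₂` are exactly the
product measures `ν × μ` with `μ` an `e^{β·Ω₂}`-conformal probability measure. -/
theorem conformal_prod_measure
    {G₁ G₂ X₁ X₂ : Type*} [Group G₁] [Group G₂] [Countable G₁] [Countable G₂]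
    [TopologicalSpace X₁] [CompactSpace X₁] [TopologicalSpace.MetrizableSpace X₁]
    [MeasurableSpace X₁] [BorelSpace X₁]
    [TopologicalSpace X₂] [CompactSpace X₂] [TopologicalSpace.MetrizableSpace X₂]
    [MeasurableSpace X₂] [BorelSpace X₂]
    [MulAction G₁ X₁] [ContinuousConstSMul G₁ X₁]
    [MulAction G₂ X₂] [ContinuousConstSMul G₂ X₂]
    (Ω₁ : G₁ → X₁ → ℝ) (hΩ₁cont : ∀ g, Continuous (Ω₁ g))
    (hΩ₁ : ∀ (g h : G₁) (x : X₁), Ω₁ g (h • x) + Ω₁ h x = Ω₁ (g * h) x)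
    (Ω₂ : G₂ → X₂ → ℝ) (hΩ₂cont : ∀ g, Continuous (Ω₂ g))
    (hΩ₂ : ∀ (g h : G₂) (x : X₂), Ω₂ g (h • x) + Ω₂ h x = Ω₂ (g * h) x)
    (β : ℝ) (ν : Measure X₁) [IsProbabilityMeasure ν]
    (hν : ConformalMeasure Ω₁ β ν)
    (hνuniq : ∀ ν' : Measure X₁, IsProbabilityMeasure ν' → ConformalMeasure Ω₁ β ν' → ν' = ν) :
    (∀ μ : Measure X₂, IsProbabilityMeasure μ → ConformalMeasure Ω₂ β μ →
      ConformalProd Ω₁ Ω₂ β (ν.prod μ)) ∧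
    (∀ η : Measure (X₁ × X₂), IsProbabilityMeasure η → ConformalProd Ω₁ Ω₂ β η →
      ∃! μ : Measure X₂,
        IsProbabilityMeasure μ ∧ ConformalMeasure Ω₂ β μ ∧ η = ν.prod μ) :=
  conformal_prod_measure_general Ω₁ hΩ₁cont hΩ₁ Ω₂ hΩ₂cont hΩ₂ β ν hν hνuniq
end

section
/- Let G be a finitely generated group of subexponential growth with word length |·|, acting on a compact metrizable space X with continuous 1-cocycle Ω : G × X → ℝ, and let β ∈ ℝ. If there exists an ergodic e^{β·Ω}-conformal probability measure μ on X, then the essential value of the G-invariant function x ↦ limsup_{g→∞} β·Ω(g,x)/|g| is ≤ 0; i.e., for μ-a.e. x ∈ X one has limsup_{g→∞} β·Ω(g,x)/|g| ≤ 0. -/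
open MeasureTheory Filter

/-- The word length of `g` with respect to a generating set `S`. -/
noncomputable def wordLength {G : Type*} [Group G] (S : Set G) (g : G) : ℕ :=
  sInf {n | ∃ w : Fin n → G, (∀ i, w i ∈ S) ∧ g = (List.ofFn w).prod}

/-! Conformality says that the density `e^{β·Ω(g,·)}` has integral one, so by Markov's
inequality `β·Ω(g,·) ≥ t` only on a set of measure at most `e^{-t}`. There are at most `(1+ε)^k`
elements of word length `k`, so for `δ > 0` the sets where `β·Ω(g,x) ≥ δk` for some `|g| = k`
have summable measures, and Borel–Cantelli gives `β·Ω(g,x) < δ|g|` for all long enough `g`,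
for almost every `x`. -/

theorem Real.limsup_nonpos_of_forall_eventually_le {α : Type*} {f : α → ℝ} {l : Filter α}
    (h : ∀ ε > 0, ∀ᶠ a in l, f a ≤ ε) : limsup f l ≤ 0 := by
  rw [limsup_eq]
  -- when the set is not bounded below, `sInf` takes the junk value `0`
  by_cases hbdd : BddBelow {a | ∀ᶠ n in l, f n ≤ a}
  · refine le_of_forall_pos_le_add fun ε hε => ?_
    rw [zero_add]
    exact csInf_le hbdd (h ε hε)
  · rw [Real.sInf_of_not_bddBelow hbdd]

section WordLength

variable {G : Type*} [Group G]

-- `0 < k` is needed: `wordLength S g = 0` also when `g` is no product of elements of `S`.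
theorem finite_setOf_wordLength_eq {S : Set G} (hS : S.Finite) {k : ℕ} (hk : 0 < k) :
    {g | wordLength S g = k}.Finite := by
  have : Finite S := hS.to_subtype
  refine (Set.finite_range fun w : Fin k → S => (List.ofFn fun i => (w i : G)).prod).subset ?_
  rintro g (rfl : wordLength S g = _)
  obtain ⟨w, hwS, hg⟩ := Nat.sInf_mem (Nat.nonempty_of_pos_sInf hk)
  exact ⟨fun i => ⟨w i, hwS i⟩, hg.symm⟩

end WordLength

section ConformalMeasure

variable {G X : Type*} [Group G] [TopologicalSpace X] [MeasurableSpace X] [MulAction G X]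
  {Ω : G → X → ℝ} {β : ℝ} {μ : Measure X} [IsProbabilityMeasure μ]

theorem ConformalMeasure.integral_exp (hμ : ConformalMeasure Ω β μ) (g : G) :
    ∫ x, Real.exp (β * Ω g x) ∂μ = 1 := by
  simpa using hμ g 1

theorem ConformalMeasure.measureReal_le_le_exp_neg (hμ : ConformalMeasure Ω β μ) (g : G)
    (t : ℝ) : μ.real {x | t ≤ β * Ω g x} ≤ Real.exp (-t) := by
  have hint : Integrable (fun x => Real.exp (1 * (β * Ω g x))) μ := by
    refine Integrable.of_integral_ne_zero ?_
    simp [hμ.integral_exp g]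
  have hmgf : ProbabilityTheory.mgf (fun x => β * Ω g x) μ 1 = 1 := by
    simp [ProbabilityTheory.mgf, hμ.integral_exp g]
  simpa [hmgf] using ProbabilityTheory.measure_ge_le_exp_mul_mgf t zero_le_one hint

end ConformalMeasure

section LevelSets

variable {ι X : Type*} [MeasurableSpace X] {μ : Measure X}
  {ℓ : ι → ℕ} {F : ι → X → ℝ}

theorem measureReal_biUnion_level_le {k : ℕ} (hk : {i | ℓ i = k}.Finite)
    (htail : ∀ i t, μ.real {x | t ≤ F i x} ≤ Real.exp (-t)) (t : ℝ) :
    μ.real (⋃ i ∈ {i | ℓ i = k}, {x | t ≤ F i x}) ≤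
      Nat.card {i // ℓ i = k} * Real.exp (-t) := by
  calc μ.real (⋃ i ∈ {i | ℓ i = k}, {x | t ≤ F i x})
      = μ.real (⋃ i ∈ hk.toFinset, {x | t ≤ F i x}) := by simp
    _ ≤ ∑ i ∈ hk.toFinset, μ.real {x | t ≤ F i x} := measureReal_biUnion_finset_le _ _
    _ ≤ ∑ _i ∈ hk.toFinset, Real.exp (-t) := Finset.sum_le_sum fun i _ => htail i t
    _ = Nat.card {i // ℓ i = k} * Real.exp (-t) := by
      rw [Finset.sum_const, nsmul_eq_mul, ← Nat.card_eq_card_finite_toFinset hk]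
      rfl

theorem summable_measureReal_biUnion_level
    (hfin : ∀ᶠ k in atTop, {i | ℓ i = k}.Finite)
    (hgrowth : ∀ ε > (0 : ℝ), ∀ᶠ k in atTop, (Nat.card {i // ℓ i = k} : ℝ) ≤ (1 + ε) ^ k)
    (htail : ∀ i t, μ.real {x | t ≤ F i x} ≤ Real.exp (-t))
    {δ : ℝ} (hδ : 0 < δ) :
    Summable fun k : ℕ => μ.real (⋃ i ∈ {i | ℓ i = k}, {x | δ * k ≤ F i x}) := by
  have hr1 : (1 + δ) * Real.exp (-δ) < 1 := by
    rw [Real.exp_neg, ← div_eq_mul_inv, div_lt_one (Real.exp_pos δ)]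
    linarith [Real.add_one_lt_exp hδ.ne']
  refine (summable_geometric_of_lt_one (by positivity) hr1).of_norm_bounded_eventually_nat ?_
  filter_upwards [hfin, hgrowth δ hδ] with k hk hcard
  rw [Real.norm_of_nonneg measureReal_nonneg]
  calc _ ≤ Nat.card {i // ℓ i = k} * Real.exp (-(δ * k)) :=
        measureReal_biUnion_level_le hk htail _
    _ ≤ (1 + δ) ^ k * Real.exp (-δ) ^ k := by
      rw [← Real.exp_nat_mul, show (k : ℝ) * -δ = -(δ * k) by ring]
      gcongr
    _ = ((1 + δ) * Real.exp (-δ)) ^ k := (mul_pow _ _ _).symm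

variable [IsFiniteMeasure μ]

theorem ae_eventually_lt_mul_level
    (hfin : ∀ᶠ k in atTop, {i | ℓ i = k}.Finite)
    (hgrowth : ∀ ε > (0 : ℝ), ∀ᶠ k in atTop, (Nat.card {i // ℓ i = k} : ℝ) ≤ (1 + ε) ^ k)
    (htail : ∀ i t, μ.real {x | t ≤ F i x} ≤ Real.exp (-t))
    {δ : ℝ} (hδ : 0 < δ) :
    ∀ᵐ x ∂μ, ∀ᶠ k in atTop, ∀ i, ℓ i = k → F i x < δ * k := by
  have hsum := (summable_measureReal_biUnion_level hfin hgrowth htail hδ).tsum_ofReal_ne_top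
  simp only [fun s => ofReal_measureReal (μ := μ) (s := s)] at hsum
  filter_upwards [ae_eventually_notMem hsum] with x hx
  filter_upwards [hx] with k hk
  simpa using hk

theorem ae_limsup_div_level_nonpos
    (hfin : ∀ᶠ k in atTop, {i | ℓ i = k}.Finite)
    (hgrowth : ∀ ε > (0 : ℝ), ∀ᶠ k in atTop, (Nat.card {i // ℓ i = k} : ℝ) ≤ (1 + ε) ^ k)
    (htail : ∀ i t, μ.real {x | t ≤ F i x} ≤ Real.exp (-t)) :
    ∀ᵐ x ∂μ, limsup (fun i => F i x / ℓ i) (comap ℓ atTop) ≤ 0 := by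
  have h := ae_all_iff.2 fun m : ℕ =>
    ae_eventually_lt_mul_level hfin hgrowth htail (Nat.one_div_pos_of_nat (n := m))
  filter_upwards [h] with x hx
  refine Real.limsup_nonpos_of_forall_eventually_le fun ε hε => ?_
  obtain ⟨m, hm⟩ := exists_nat_one_div_lt hε
  rw [eventually_comap]
  filter_upwards [hx m, eventually_gt_atTop 0] with k hk hk0 i hi
  rw [hi, div_le_iff₀ (by positivity)]
  exact (hk i hi).le.trans (by gcongr)

end LevelSets

theorem ergodic_conformal_limsup_nonpos_general
    {G X : Type*} [Group G] [TopologicalSpace X] [MeasurableSpace X]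
    [MulAction G X]
    (S : Finset G)
    (hgrowth : ∀ ε > (0 : ℝ), ∀ᶠ k in atTop,
      (Nat.card {g : G // wordLength (S : Set G) g = k} : ℝ) ≤ (1 + ε) ^ k)
    (Ω : G → X → ℝ)
    (β : ℝ) (μ : Measure X) [IsProbabilityMeasure μ]
    (hconf : ConformalMeasure Ω β μ) :
    ∀ᵐ x ∂μ,
      Filter.limsup (fun g : G => β * Ω g x / (wordLength (S : Set G) g : ℝ))
        (Filter.comap (fun g : G => wordLength (S : Set G) g) Filter.atTop) ≤ 0 :=
  ae_limsup_div_level_nonpos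
    (eventually_gt_atTop 0 |>.mono fun _ hk => finite_setOf_wordLength_eq S.finite_toSet hk)
    hgrowth hconf.measureReal_le_le_exp_neg

/-- For a finitely generated group of subexponential growth, an ergodic
conformal measure forces `limsup_{g→∞} β·Ω(g,x)/|g| ≤ 0` almost everywhere. -/
theorem ergodic_conformal_limsup_nonpos
    {G X : Type*} [Group G] [Countable G] [TopologicalSpace X] [CompactSpace X]
    [TopologicalSpace.MetrizableSpace X] [MeasurableSpace X] [BorelSpace X]
    [MulAction G X] [ContinuousConstSMul G X]
    (S : Finset G) (hsym : (S : Set G)⁻¹ = (S : Set G))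
    (hgen : Subgroup.closure (S : Set G) = ⊤)
    (hgrowth : ∀ ε > (0 : ℝ), ∀ᶠ k in atTop,
      (Nat.card {g : G // wordLength (S : Set G) g = k} : ℝ) ≤ (1 + ε) ^ k)
    (Ω : G → X → ℝ) (hΩcont : ∀ g : G, Continuous (Ω g))
    (hΩ : ∀ (g h : G) (x : X), Ω g (h • x) + Ω h x = Ω (g * h) x)
    (β : ℝ) (μ : Measure X) [IsProbabilityMeasure μ]
    (hconf : ConformalMeasure Ω β μ)
    (herg : ∀ B : Set X, MeasurableSet B →
      (∀ g : G, (fun x => g • x) ⁻¹' B = B) → μ B = 0 ∨ μ B = 1) :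
    ∀ᵐ x ∂μ,
      Filter.limsup (fun g : G => β * Ω g x / (wordLength (S : Set G) g : ℝ))
        (Filter.comap (fun g : G => wordLength (S : Set G) g) Filter.atTop) ≤ 0 :=
  ergodic_conformal_limsup_nonpos_general S hgrowth Ω β μ hconf
end

section
/- Let G be a finitely generated group of subexponential growth acting on a compact metrizable space X, with continuous 1-cocycle Ω : G × X → ℝ and β ∈ ℝ. If there exists a point x ∈ X such that limsup_{g→∞} β·Ω(g,x)/|g| ≤ 0, then for every s > 0 the series Σ_{g∈G} e^{β·Ω(g,x) − |g|·s} converges, the normalized measures m_s = (Σ_g e^{β·Ω(g,x)−|g|s})^{-1} Σ_{g∈G} e^{β·Ω(g,x)−|g|s} δ_{g·x} satisfy |∫ f(h·y) e^{β·Ω(h,y)} dm_s(y) − ∫ f dm_s| ≤ ‖f‖_∞ (e^{|h|s} − 1) for all continuous f and all h ∈ G, and consequently any weak* limit point of (m_s) as s → 0 is an e^{β·Ω}-conformal probability measure. -/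
/-!
Since `Ω` is a continuous cocycle, `|Ω(g,y)| ≤ C|g|`, so the hypothesis on the limsup is a genuine
one and yields `β·Ω(g,x) ≤ ε|g|` for `|g|` large. Together with subexponential growth (at most
`e^{εk}` elements of length `k`) this makes `Σ_g e^{β·Ω(g,x) − |g|s}` converge for every `s > 0`.
By the cocycle identity, integrating `f(h·y) e^{β·Ω(h,y)}` against `m_s` amounts to reindexing the
series by `g ↦ hg`, which only replaces `e^{−|hg|s}` by `e^{−|g|s}`; since `||hg| − |g|| ≤ |h|`
the error is at most `‖f‖(e^{|h|s} − 1)`, which vanishes as `s → 0`.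
-/

open MeasureTheory Filter Topology

/-- The integral of `f` against the normalized measure
`m_s = c_s⁻¹ Σ_g e^{β·Ω(g,x) − |g|·s} δ_{g·x}`. -/
noncomputable def msIntegral {G X : Type*} [Group G] [MulAction G X]
    (Ω : G → X → ℝ) (β : ℝ) (ℓ : G → ℕ) (x : X) (s : ℝ) (f : X → ℝ) : ℝ :=
  (∑' g : G, Real.exp (β * Ω g x - (ℓ g : ℝ) * s))⁻¹ *
    ∑' g : G, Real.exp (β * Ω g x - (ℓ g : ℝ) * s) * f (g • x)

open Real

section WordLength

variable {G : Type*} [Group G] {S : Set G}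

theorem submonoid_closure_eq_top_of_inv_eq (hsym : S⁻¹ = S) (hgen : Subgroup.closure S = ⊤) :
    Submonoid.closure S = ⊤ := by
  have h := Subgroup.closure_toSubmonoid S
  rwa [hgen, hsym, Set.union_self, Subgroup.top_toSubmonoid, eq_comm] at h

theorem exists_word_iff_exists_list {g : G} {n : ℕ} :
    (∃ w : Fin n → G, (∀ i, w i ∈ S) ∧ g = (List.ofFn w).prod) ↔
      ∃ l : List G, (∀ a ∈ l, a ∈ S) ∧ l.length = n ∧ l.prod = g := by
  constructor
  · rintro ⟨w, hw, rfl⟩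
    exact ⟨List.ofFn w, by simpa [List.mem_ofFn] using hw, List.length_ofFn, rfl⟩
  · rintro ⟨l, hl, rfl, rfl⟩
    exact ⟨l.get, fun i => hl _ (l.get_mem i), by rw [List.ofFn_get]⟩

theorem exists_word_of_wordLength (hS : Submonoid.closure S = ⊤) (g : G) :
    ∃ w : Fin (wordLength S g) → G, (∀ i, w i ∈ S) ∧ g = (List.ofFn w).prod := by
  obtain ⟨l, hl, hprod⟩ := Submonoid.exists_list_of_mem_closure (hS ▸ Submonoid.mem_top g)
  exact Nat.sInf_mem (s := {n | ∃ w : Fin n → G, (∀ i, w i ∈ S) ∧ g = (List.ofFn w).prod})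
    ⟨l.length, exists_word_iff_exists_list.2 ⟨l, hl, rfl, hprod⟩⟩

theorem exists_list_of_wordLength (hS : Submonoid.closure S = ⊤) (g : G) :
    ∃ l : List G, (∀ a ∈ l, a ∈ S) ∧ l.length = wordLength S g ∧ l.prod = g :=
  exists_word_iff_exists_list.1 (exists_word_of_wordLength hS g)

theorem wordLength_list_prod_le {l : List G} (hl : ∀ a ∈ l, a ∈ S) :
    wordLength S l.prod ≤ l.length :=
  Nat.sInf_le (exists_word_iff_exists_list.2 ⟨l, hl, rfl, rfl⟩)

theorem wordLength_mul_le (hS : Submonoid.closure S = ⊤) (g h : G) :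
    wordLength S (g * h) ≤ wordLength S g + wordLength S h := by
  obtain ⟨l, hl, hlen, rfl⟩ := exists_list_of_wordLength hS g
  obtain ⟨l', hl', hlen', rfl⟩ := exists_list_of_wordLength hS h
  rw [← hlen, ← hlen', ← List.length_append, ← List.prod_append]
  exact wordLength_list_prod_le fun a ha => (List.mem_append.1 ha).elim (hl a) (hl' a)

theorem wordLength_inv_le (hsym : S⁻¹ = S) (hS : Submonoid.closure S = ⊤) (g : G) :
    wordLength S g⁻¹ ≤ wordLength S g := by
  obtain ⟨l, hl, hlen, rfl⟩ := exists_list_of_wordLength hS g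
  rw [← hlen, List.prod_inv_reverse, ← List.length_map (f := fun a : G => a⁻¹),
    ← List.length_reverse]
  refine wordLength_list_prod_le fun b hb => ?_
  obtain ⟨a, ha, rfl⟩ := List.mem_map.1 (List.mem_reverse.1 hb)
  exact hsym ▸ Set.inv_mem_inv.2 (hl a ha)

theorem wordLength_inv (hsym : S⁻¹ = S) (hS : Submonoid.closure S = ⊤) (g : G) :
    wordLength S g⁻¹ = wordLength S g :=
  (wordLength_inv_le hsym hS g).antisymm (by simpa using wordLength_inv_le hsym hS g⁻¹)

theorem abs_wordLength_mul_sub_le (hsym : S⁻¹ = S) (hS : Submonoid.closure S = ⊤) (h g : G) :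
    |(wordLength S (h * g) : ℝ) - wordLength S g| ≤ wordLength S h := by
  have hle : (wordLength S (h * g) : ℝ) ≤ wordLength S h + wordLength S g := by
    exact_mod_cast wordLength_mul_le hS h g
  have hge : (wordLength S g : ℝ) ≤ wordLength S h + wordLength S (h * g) := by
    have := wordLength_mul_le hS h⁻¹ (h * g)
    rw [inv_mul_cancel_left, wordLength_inv hsym hS] at this
    exact_mod_cast this
  exact abs_sub_le_iff.2 ⟨by linarith, by linarith⟩

theorem finite_wordLength_eq (hS : Submonoid.closure S = ⊤) (hSfin : S.Finite) (k : ℕ) :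
    Finite {g : G // wordLength S g = k} := by
  have : Finite S := hSfin
  refine Set.Finite.subset
    (Set.finite_range fun w : Fin k → S => (List.ofFn fun i => (w i : G)).prod)
    fun g (hg : wordLength S g = k) => ?_
  subst hg
  obtain ⟨w, hw, hprod⟩ := exists_word_of_wordLength hS g
  exact ⟨fun i => ⟨w i, hw i⟩, hprod.symm⟩

end WordLength

section Cocycle

variable {G X : Type*} [Group G] [MulAction G X] {Ω : G → X → ℝ}

theorem cocycle_one (hΩ : ∀ (g h : G) (x : X), Ω g (h • x) + Ω h x = Ω (g * h) x) (y : X) :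
    Ω 1 y = 0 := by
  simpa [one_smul] using hΩ 1 1 y

theorem abs_cocycle_list_prod_le (hΩ : ∀ (g h : G) (x : X), Ω g (h • x) + Ω h x = Ω (g * h) x)
    {C : ℝ} {l : List G} (hl : ∀ a ∈ l, ∀ y, |Ω a y| ≤ C) (y : X) :
    |Ω l.prod y| ≤ C * l.length := by
  induction l generalizing y with
  | nil => simp [cocycle_one hΩ]
  | cons a l ih =>
    rw [List.prod_cons, ← hΩ, List.length_cons, Nat.cast_succ, mul_add_one, add_comm (C * _)]
    exact (abs_add_le _ _).trans (add_le_add (hl a List.mem_cons_self _)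
      (ih (fun b hb => hl b (List.mem_cons_of_mem a hb)) y))

theorem exists_abs_cocycle_le_mul_wordLength [TopologicalSpace X] [CompactSpace X] {S : Set G}
    (hS : Submonoid.closure S = ⊤) (hSfin : S.Finite)
    (hΩ : ∀ (g h : G) (x : X), Ω g (h • x) + Ω h x = Ω (g * h) x)
    (hΩcont : ∀ g, Continuous (Ω g)) :
    ∃ C, ∀ g y, |Ω g y| ≤ C * wordLength S g := by
  obtain ⟨C, hC⟩ := (hSfin.image fun a => ‖(⟨Ω a, hΩcont a⟩ : C(X, ℝ))‖).bddAbove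
  refine ⟨C, fun g y => ?_⟩
  obtain ⟨l, hlS, hlen, rfl⟩ := exists_list_of_wordLength hS g
  rw [← hlen]
  refine abs_cocycle_list_prod_le hΩ (fun a ha y => ?_) y
  exact ((⟨Ω a, hΩcont a⟩ : C(X, ℝ)).norm_coe_le_norm y).trans (hC ⟨a, hlS a ha, rfl⟩)

end Cocycle

theorem eventually_le_mul_of_limsup_div_le_zero {ι : Type*} {ℓ : ι → ℕ} {u : ι → ℝ} {C : ℝ}
    (hu : ∀ i, u i ≤ C * ℓ i) (hlim : limsup (fun i => u i / ℓ i) (comap ℓ atTop) ≤ 0)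
    {ε : ℝ} (hε : 0 < ε) : ∀ᶠ i in comap ℓ atTop, u i ≤ ε * ℓ i := by
  have hpos : ∀ᶠ i in comap ℓ atTop, (0 : ℝ) < ℓ i :=
    (tendsto_comap.eventually (eventually_gt_atTop 0)).mono fun i hi => by exact_mod_cast hi
  have hbdd : IsBoundedUnder (· ≤ ·) (comap ℓ atTop) fun i => u i / ℓ i :=
    isBoundedUnder_of_eventually_le (hpos.mono fun i hi => (div_le_iff₀ hi).2 (hu i))
  filter_upwards [hpos, eventually_lt_of_limsup_lt (hlim.trans_lt hε) hbdd] with i hi hlt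
  exact ((div_lt_iff₀ hi).1 hlt).le

section Growth

variable {G : Type*} {ℓ : G → ℕ}

theorem summable_exp_neg_mul (hfin : ∀ k, Finite {g // ℓ g = k})
    (hgrowth : ∀ ε > (0 : ℝ), ∀ᶠ k in atTop, (Nat.card {g // ℓ g = k} : ℝ) ≤ (1 + ε) ^ k)
    {t : ℝ} (ht : 0 < t) : Summable fun g => exp (-(ℓ g * t)) := by
  have hfiber (k : ℕ) :
      ∑' g : {g // ℓ g = k}, exp (-(ℓ g * t)) = Nat.card {g // ℓ g = k} * exp (-(k * t)) := by
    rw [tsum_congr fun g : {g // ℓ g = k} => by rw [g.2], tsum_const, nsmul_eq_mul]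
  rw [← (Equiv.sigmaFiberEquiv ℓ).summable_iff]
  refine (summable_sigma_of_nonneg fun _ => (exp_pos _).le).2 ⟨fun k => Summable.of_finite, ?_⟩
  refine .of_norm_bounded_eventually_nat (summable_geometric_of_lt_one (exp_pos (-(t / 2))).le
    (exp_lt_one_iff.2 (by linarith))) ?_
  filter_upwards [hgrowth (exp (t / 2) - 1) (by linarith [add_one_lt_exp (half_pos ht).ne'])]
    with k hk
  rw [add_sub_cancel, ← exp_nat_mul] at hk
  simp only [Equiv.sigmaFiberEquiv_apply, hfiber]
  rw [norm_of_nonneg (by positivity), ← exp_nat_mul]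
  calc _ ≤ exp (k * (t / 2)) * exp (-(k * t)) := by gcongr
    _ = exp (k * -(t / 2)) := by rw [← exp_add]; ring_nf

theorem summable_exp_sub_mul (hfin : ∀ k, Finite {g // ℓ g = k})
    (hgrowth : ∀ ε > (0 : ℝ), ∀ᶠ k in atTop, (Nat.card {g // ℓ g = k} : ℝ) ≤ (1 + ε) ^ k)
    {u : G → ℝ} {t s : ℝ} (hts : t < s) (hu : ∀ᶠ g in comap ℓ atTop, u g ≤ t * ℓ g) :
    Summable fun g => exp (u g - ℓ g * s) := by
  have hcof : ∀ᶠ g in cofinite, u g ≤ t * ℓ g :=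
    (Nat.cofinite_eq_atTop ▸ Tendsto.cofinite_of_finite_preimage_singleton hfin).le_comap hu
  refine (summable_exp_neg_mul hfin hgrowth (sub_pos.2 hts)).of_norm_bounded_eventually
    (hcof.mono fun g hg => ?_)
  rw [norm_of_nonneg (exp_pos _).le, exp_le_exp]
  linarith

end Growth

theorem abs_exp_sub_one_le_exp_sub_one {t r : ℝ} (h : |t| ≤ r) : |exp t - 1| ≤ exp r - 1 := by
  rcases le_total 0 t with ht | ht
  · rw [abs_of_nonneg (by linarith [add_one_le_exp t])]
    linarith [exp_le_exp.2 ((le_abs_self t).trans h)]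
  · rw [abs_of_nonpos (by linarith [exp_le_one_iff.2 ht])]
    linarith [add_one_le_exp t, add_one_le_exp r, neg_abs_le t]

theorem abs_tsum_sub_tsum_le {ι : Type*} {p q w : ι → ℝ} (hq : Summable q) (hw : Summable w)
    (h : ∀ i, |p i - q i| ≤ w i) : |∑' i, p i - ∑' i, q i| ≤ ∑' i, w i := by
  have hpq : Summable fun i => p i - q i := hw.of_norm_bounded h
  rw [← (by simpa using hpq.add hq : Summable p).tsum_sub hq]
  exact (norm_tsum_le_tsum_norm hpq.norm).trans (hpq.norm.tsum_le_tsum h hw)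

section ApproximateConformality

variable {G X : Type*} [Group G] [MulAction G X] {Ω : G → X → ℝ} {β : ℝ} {ℓ : G → ℕ} {x : X}
  {s : ℝ}

theorem abs_msIntegral_smul_sub_le (hΩ : ∀ (g h : G) (x : X), Ω g (h • x) + Ω h x = Ω (g * h) x)
    (hs : 0 ≤ s) (hsum : Summable fun g => exp (β * Ω g x - ℓ g * s)) (h : G)
    (hℓ : ∀ g, |(ℓ (h * g) : ℝ) - ℓ g| ≤ ℓ h) {f : X → ℝ} {M : ℝ} (hf : ∀ y, |f y| ≤ M) :
    |msIntegral Ω β ℓ x s (fun y => f (h • y) * exp (β * Ω h y)) - msIntegral Ω β ℓ x s f| ≤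
      M * (exp (ℓ h * s) - 1) := by
  set a : G → ℝ := fun g => exp (β * Ω g x - ℓ g * s)
  set K := M * (exp (ℓ h * s) - 1)
  have hc : 0 < ∑' g, a g := hsum.tsum_pos (fun g => (exp_pos _).le) 1 (exp_pos _)
  have hsum_h : Summable fun g => a (h * g) := (Equiv.mulLeft h).summable_iff.2 hsum
  -- the cocycle identity turns the `g`-th term of the translated series into the `hg`-th term
  -- of the series of `m_s`, up to the weight `e^{(|hg| - |g|)s}`
  have hterm (g : G) :
      a g * (f (h • g • x) * exp (β * Ω h (g • x))) =
        a (h * g) * exp ((ℓ (h * g) - ℓ g) * s) * f ((h * g) • x) := by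
    simp only [a, mul_smul, ← hΩ h g x]
    rw [mul_comm (f _), ← mul_assoc, ← exp_add, ← exp_add]
    ring_nf
  have hM : 0 ≤ M := (abs_nonneg _).trans (hf x)
  have hbound (g : G) :
      |a (h * g) * exp ((ℓ (h * g) - ℓ g) * s) * f ((h * g) • x) - a (h * g) * f ((h * g) • x)|
        ≤ a (h * g) * K := by
    rw [← sub_mul, ← mul_sub_one, abs_mul, abs_mul, abs_of_pos (exp_pos _), mul_assoc,
      mul_comm _ |f _|]
    refine mul_le_mul_of_nonneg_left
      (mul_le_mul (hf _) (abs_exp_sub_one_le_exp_sub_one ?_) (abs_nonneg _) hM) (exp_pos _).le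
    rw [abs_mul, abs_of_nonneg hs]
    exact mul_le_mul_of_nonneg_right (hℓ g) hs
  have hnum : |∑' g, a g * (f (h • g • x) * exp (β * Ω h (g • x))) - ∑' g, a g * f (g • x)| ≤
      (∑' g, a g) * K := by
    rw [tsum_congr hterm, ← (Equiv.mulLeft h).tsum_eq fun g => a g * f (g • x),
      ← (Equiv.mulLeft h).tsum_eq a, ← tsum_mul_right]
    refine abs_tsum_sub_tsum_le ((hsum_h.mul_right M).of_norm_bounded fun g => ?_)
      (hsum_h.mul_right K) hbound
    rw [norm_mul, norm_of_nonneg (exp_pos _).le]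
    exact mul_le_mul_of_nonneg_left (hf _) (exp_pos _).le
  unfold msIntegral
  rw [← mul_sub, abs_mul, abs_inv, abs_of_pos hc]
  calc _ ≤ (∑' g, a g)⁻¹ * ((∑' g, a g) * K) := by gcongr
    _ = K := by field_simp

end ApproximateConformality

theorem conformalMeasure_of_tendsto_msIntegral {G X : Type*} [Group G] [TopologicalSpace X]
    [CompactSpace X] [MeasurableSpace X] [MulAction G X] [ContinuousConstSMul G X]
    {Ω : G → X → ℝ} {β : ℝ} {ℓ : G → ℕ} {x : X} (hΩcont : ∀ g, Continuous (Ω g))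
    (hest : ∀ s > (0 : ℝ), ∀ h : G, ∀ f : C(X, ℝ),
      |msIntegral Ω β ℓ x s (fun y => f (h • y) * exp (β * Ω h y)) - msIntegral Ω β ℓ x s f| ≤
        ‖f‖ * (exp (ℓ h * s) - 1))
    {sq : ℕ → ℝ} (hpos : ∀ k, 0 < sq k) (hsq : Tendsto sq atTop (𝓝 0)) {m : Measure X}
    (hconv : ∀ f : C(X, ℝ),
      Tendsto (fun k => msIntegral Ω β ℓ x (sq k) f) atTop (𝓝 (∫ y, f y ∂m))) :
    ConformalMeasure Ω β m := by
  intro h f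
  let F : C(X, ℝ) := ⟨fun y => f (h • y) * exp (β * Ω h y), by fun_prop⟩
  have herr : Tendsto (fun k => ‖f‖ * (exp (ℓ h * sq k) - 1)) atTop (𝓝 0) := by
    simpa using ((hsq.const_mul (ℓ h : ℝ)).rexp.sub_const 1).const_mul ‖f‖
  have hdiff : Tendsto (fun k => msIntegral Ω β ℓ x (sq k) F - msIntegral Ω β ℓ x (sq k) f)
      atTop (𝓝 0) :=
    squeeze_zero_norm (fun k => hest (sq k) (hpos k) h f) herr
  exact sub_eq_zero.1 (tendsto_nhds_unique ((hconv F).sub (hconv f)) hdiff)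

theorem conformal_measure_from_limsup_general
    {G X : Type*} [Group G] [TopologicalSpace X] [CompactSpace X] [MeasurableSpace X]
    [MulAction G X] [ContinuousConstSMul G X]
    (S : Finset G) (hsym : (S : Set G)⁻¹ = (S : Set G))
    (hgen : Subgroup.closure (S : Set G) = ⊤)
    (hgrowth : ∀ ε > (0 : ℝ), ∀ᶠ k in atTop,
      (Nat.card {g : G // wordLength (S : Set G) g = k} : ℝ) ≤ (1 + ε) ^ k)
    (Ω : G → X → ℝ) (hΩcont : ∀ g : G, Continuous (Ω g))
    (hΩ : ∀ (g h : G) (x : X), Ω g (h • x) + Ω h x = Ω (g * h) x)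
    (β : ℝ) (x : X)
    (hx : Filter.limsup (fun g : G => β * Ω g x / (wordLength (S : Set G) g : ℝ))
      (Filter.comap (fun g : G => wordLength (S : Set G) g) Filter.atTop) ≤ 0) :
    (∀ s > (0 : ℝ),
      Summable fun g : G =>
        Real.exp (β * Ω g x - (wordLength (S : Set G) g : ℝ) * s)) ∧
    (∀ s > (0 : ℝ), ∀ h : G, ∀ f : C(X, ℝ),
      |msIntegral Ω β (wordLength (S : Set G)) x s
          (fun y => f (h • y) * Real.exp (β * Ω h y)) -
        msIntegral Ω β (wordLength (S : Set G)) x s f| ≤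
      ‖f‖ * (Real.exp ((wordLength (S : Set G) h : ℝ) * s) - 1)) ∧
    (∀ sq : ℕ → ℝ, (∀ k, 0 < sq k) → Tendsto sq atTop (𝓝 0) →
      ∀ m : Measure X, IsProbabilityMeasure m →
      (∀ f : C(X, ℝ),
        Tendsto (fun k => msIntegral Ω β (wordLength (S : Set G)) x (sq k) f)
          atTop (𝓝 (∫ y, f y ∂m))) →
      ConformalMeasure Ω β m) := by
  have hS := submonoid_closure_eq_top_of_inv_eq hsym hgen
  obtain ⟨C, hC⟩ := exists_abs_cocycle_le_mul_wordLength hS S.finite_toSet hΩ hΩcont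
  have hβΩ (g : G) : β * Ω g x ≤ |β| * C * wordLength (S : Set G) g := by
    rw [mul_assoc]
    exact (le_abs_self _).trans ((abs_mul _ _).trans_le
      (mul_le_mul_of_nonneg_left (hC g x) (abs_nonneg β)))
  have hsum (s : ℝ) (hs : 0 < s) :
      Summable fun g : G => exp (β * Ω g x - (wordLength (S : Set G) g : ℝ) * s) :=
    summable_exp_sub_mul (finite_wordLength_eq hS S.finite_toSet) hgrowth (half_lt_self hs)
      (eventually_le_mul_of_limsup_div_le_zero hβΩ hx (half_pos hs))
  have hest (s : ℝ) (hs : 0 < s) (h : G) (f : C(X, ℝ)) :=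
    abs_msIntegral_smul_sub_le hΩ hs.le (hsum s hs) h (abs_wordLength_mul_sub_le hsym hS h)
      f.norm_coe_le_norm
  exact ⟨hsum, hest, fun sq hpos hsq m _ hconv =>
    conformalMeasure_of_tendsto_msIntegral hΩcont hest hpos hsq hconv⟩

/-- If `limsup_{g→∞} β·Ω(g,x)/|g| ≤ 0` at some point `x`, then the
series defining `m_s` converge, the measures `m_s` are approximately conformal with the
explicit error bound, and any weak* limit point of `(m_s)` as `s → 0` is an
`e^{β·Ω}`-conformal probability measure. -/
theorem conformal_measure_from_limsup
    {G X : Type*} [Group G] [Countable G] [TopologicalSpace X] [CompactSpace X]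
    [TopologicalSpace.MetrizableSpace X] [MeasurableSpace X] [BorelSpace X]
    [MulAction G X] [ContinuousConstSMul G X]
    (S : Finset G) (hsym : (S : Set G)⁻¹ = (S : Set G))
    (hgen : Subgroup.closure (S : Set G) = ⊤)
    (hgrowth : ∀ ε > (0 : ℝ), ∀ᶠ k in atTop,
      (Nat.card {g : G // wordLength (S : Set G) g = k} : ℝ) ≤ (1 + ε) ^ k)
    (Ω : G → X → ℝ) (hΩcont : ∀ g : G, Continuous (Ω g))
    (hΩ : ∀ (g h : G) (x : X), Ω g (h • x) + Ω h x = Ω (g * h) x)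
    (β : ℝ) (x : X)
    (hx : Filter.limsup (fun g : G => β * Ω g x / (wordLength (S : Set G) g : ℝ))
      (Filter.comap (fun g : G => wordLength (S : Set G) g) Filter.atTop) ≤ 0) :
    (∀ s > (0 : ℝ),
      Summable fun g : G =>
        Real.exp (β * Ω g x - (wordLength (S : Set G) g : ℝ) * s)) ∧
    (∀ s > (0 : ℝ), ∀ h : G, ∀ f : C(X, ℝ),
      |msIntegral Ω β (wordLength (S : Set G)) x s
          (fun y => f (h • y) * Real.exp (β * Ω h y)) -
        msIntegral Ω β (wordLength (S : Set G)) x s f| ≤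
      ‖f‖ * (Real.exp ((wordLength (S : Set G) h : ℝ) * s) - 1)) ∧
    (∀ sq : ℕ → ℝ, (∀ k, 0 < sq k) → Tendsto sq atTop (𝓝 0) →
      ∀ m : Measure X, IsProbabilityMeasure m →
      (∀ f : C(X, ℝ),
        Tendsto (fun k => msIntegral Ω β (wordLength (S : Set G)) x (sq k) f)
          atTop (𝓝 (∫ y, f y ∂m))) →
      ConformalMeasure Ω β m) :=
  conformal_measure_from_limsup_general S hsym hgen hgrowth Ω hΩcont hΩ β x hx
end

section
/- Let 𝓡 ⊂ C₀(ℝ, (0,∞)) be the set of functions of the form r(β) = (Σ_{i=1}^N a_i^β)/(Σ_{j=1}^M b_j^β) with N, M ∈ ℕ, a_i, b_j ∈ (0,∞), max_j b_j > max_i a_i, and min_j b_j < min_i a_i. Then 𝓡 is dense in C₀(ℝ, [0,∞)) with respect to the uniform norm. -/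
/-!
Substituting `v = σ(β) = eᵝ / (1 + eᵝ)` turns `f` into a continuous function `g` on `[0, 1]`
vanishing at both endpoints; this is where `f → 0` at `±∞` is used. Approximate `g` uniformly by
its Bernstein polynomial `∑ₖ g(k/n) C(n,k) vᵏ (1 - v)ⁿ⁻ᵏ`, and then each coefficient `g(k/n)` by a
fraction `cₖ / (Q C(n,k))` with `cₖ ∈ ℕ`, `c₀ = cₙ = 0` and `cₖ ≥ 1` for `0 < k < n`; as the
Bernstein basis is a partition of unity this costs at most `1/Q`. Since
`C(n,k) vᵏ (1 - v)ⁿ⁻ᵏ = C(n,k) eᵏᵝ / (1 + eᵝ)ⁿ` and `Q (1 + eᵝ)ⁿ = ∑ⱼ Q C(n,j) (eʲ)ᵝ`, the result is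
`(∑ᵢ aᵢᵝ) / (∑ⱼ bⱼᵝ)` where the `aᵢ` list `eᵏ` with multiplicity `cₖ` and the `bⱼ` list `eʲ` with
multiplicity `Q C(n,j)`. Then `max b = eⁿ` and `min b = 1` lie strictly beyond every `aᵢ = eᵏ`,
`0 < k < n`.
-/

open Filter Topology Set
open scoped unitInterval

theorem Fin.exists_tuple_with_multiplicities {ι α : Type*} [Fintype ι] (c : ι → ℕ) (x : ι → α) :
    ∃ (N : ℕ) (a : Fin N → α), (∀ i, ∃ k, 0 < c k ∧ a i = x k) ∧
      (∀ k, 0 < c k → ∃ i, a i = x k) ∧ ∀ φ : α → ℝ, ∑ i, φ (a i) = ∑ k, c k * φ (x k) := by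
  let e := (Fintype.equivFin (Σ k, Fin (c k))).symm
  refine ⟨_, fun i => x (e i).1, fun i => ⟨(e i).1, Fin.pos_iff_nonempty.mpr ⟨(e i).2⟩, rfl⟩,
    fun k hk => ⟨e.symm ⟨k, ⟨0, hk⟩⟩, by simp⟩, fun φ => ?_⟩
  rw [e.sum_comp (fun t => φ (x t.1)), ← Finset.univ_sigma_univ, Finset.sum_sigma]
  simp

theorem Topology.IsOpenEmbedding.continuous_extend_zero {X Y Z : Type*} [TopologicalSpace X]
    [TopologicalSpace Y] [T2Space Y] [TopologicalSpace Z] [Zero Z] {e : X → Y}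
    (he : IsOpenEmbedding e) {f : X → Z} (hf : Continuous f)
    (hf0 : Tendsto f (cocompact X) (𝓝 0)) : Continuous (Function.extend e f 0) := by
  refine continuous_iff_continuousAt.mpr fun y => ?_
  by_cases hy : ∃ x, e x = y
  · obtain ⟨x, rfl⟩ := hy
    rw [← he.continuousAt_iff, Function.extend_comp he.injective]
    exact hf.continuousAt
  · rw [ContinuousAt, Function.extend_apply' _ _ _ hy]
    intro U hU
    obtain ⟨K, hK, hKU⟩ := mem_cocompact.mp (hf0 hU)
    apply mem_map.mpr
    filter_upwards [(hK.image he.continuous).isClosed.isOpen_compl.mem_nhds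
      fun ⟨x, _, hx⟩ => hy ⟨x, hx⟩] with z hz
    by_cases hz' : ∃ x, e x = z
    · obtain ⟨x, rfl⟩ := hz'
      rw [mem_preimage, he.injective.extend_apply]
      exact hKU fun hx => hz ⟨x, hx, rfl⟩
    · rw [mem_preimage, Function.extend_apply' _ _ _ hz']
      exact mem_of_mem_nhds hU

theorem unitInterval.isOpenEmbedding_sigmoid : IsOpenEmbedding unitInterval.sigmoid :=
  ⟨isEmbedding_sigmoid, by rw [range_sigmoid]; exact isOpen_Ioo⟩

lemma abs_sum_mul_bernstein_le {n : ℕ} {s : Fin (n + 1) → ℝ} {δ : ℝ} (hs : ∀ k, |s k| ≤ δ)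
    (x : I) : |∑ k, s k * bernstein n k x| ≤ δ :=
  calc |∑ k, s k * bernstein n k x| ≤ ∑ k : Fin (n + 1), |s k| * bernstein n k x := by
        refine (Finset.abs_sum_le_sum_abs _ _).trans_eq ?_
        simp only [abs_mul, abs_of_nonneg bernstein_nonneg]
    _ ≤ ∑ k : Fin (n + 1), δ * bernstein n k x :=
        Finset.sum_le_sum fun k _ => mul_le_mul_of_nonneg_right (hs k) bernstein_nonneg
    _ = δ := by rw [← Finset.mul_sum, bernstein.probability, mul_one]

lemma eventually_abs_sub_sum_mul_bernstein_le (g : C(I, ℝ)) {ε : ℝ} (hε : 0 < ε) :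
    ∀ᶠ n in atTop, ∀ (s : Fin (n + 1) → ℝ) (δ : ℝ), (∀ k, |g (bernstein.z k) - s k| ≤ δ) →
      ∀ x, |g x - ∑ k, s k * bernstein n k x| ≤ ε + δ := by
  filter_upwards [Metric.tendsto_nhds.mp (bernsteinApproximation_uniform g) ε hε]
    with n hn s δ hs x
  have hB : |g x - bernsteinApproximation n g x| ≤ ε := by
    rw [abs_sub_comm]
    exact (ContinuousMap.dist_apply_le_dist x).trans hn.le
  have hsum : bernsteinApproximation n g x - ∑ k, s k * bernstein n k x
      = ∑ k, (g (bernstein.z k) - s k) * bernstein n k x := by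
    rw [bernsteinApproximation.apply, ← Finset.sum_sub_distrib]
    exact Finset.sum_congr rfl fun k _ => by rw [smul_eq_mul]; ring
  calc |g x - ∑ k, s k * bernstein n k x|
      ≤ |g x - bernsteinApproximation n g x|
        + |bernsteinApproximation n g x - ∑ k, s k * bernstein n k x| := abs_sub_le _ _ _
    _ ≤ ε + δ := add_le_add hB (hsum ▸ abs_sum_mul_bernstein_le hs x)

lemma abs_sub_floor_add_one_div_le {y m : ℝ} (hy : 0 ≤ y) (hm : 0 < m) :
    |y - (⌊m * y⌋₊ + 1) / m| ≤ 1 / m := by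
  have h₁ := Nat.floor_le (mul_nonneg hm.le hy)
  have h₂ := Nat.lt_floor_add_one (m * y)
  have h : (⌊m * y⌋₊ + 1) / m - y = (⌊m * y⌋₊ + 1 - m * y) / m := by field_simp
  rw [abs_sub_comm, h, abs_div, abs_of_pos hm, abs_of_pos (by linarith)]
  exact div_le_div_of_nonneg_right (by linarith) hm.le

theorem exists_nat_coeffs_bernstein_approx (g : C(I, ℝ)) (hg : ∀ x, 0 ≤ g x) (hg₀ : g 0 = 0)
    (hg₁ : g 1 = 0) {ε : ℝ} (hε : 0 < ε) :
    ∃ (n Q : ℕ) (c : Fin (n + 1) → ℕ), 0 < Q ∧ (∃ k, 0 < c k) ∧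
      (∀ k, 0 < c k → 0 < (k : ℕ) ∧ (k : ℕ) < n) ∧
      ∀ x, |g x - ∑ k, (c k : ℝ) / (Q * n.choose k) * bernstein n k x| ≤ ε := by
  obtain ⟨n, hn, hbern⟩ :=
    ((eventually_ge_atTop 2).and (eventually_abs_sub_sum_mul_bernstein_le g (half_pos hε))).exists
  obtain ⟨Q, hQ⟩ := exists_nat_gt (2 / ε)
  have hQpos : (0 : ℝ) < Q := (by positivity : (0 : ℝ) < 2 / ε).trans hQ
  let c : Fin (n + 1) → ℕ := fun k =>
    if 0 < (k : ℕ) ∧ (k : ℕ) < n then ⌊(Q * n.choose k) * g (bernstein.z k)⌋₊ + 1 else 0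
  have hc_coeff : ∀ k, |g (bernstein.z k) - c k / (Q * n.choose k)| ≤ ε / 2 := by
    intro k
    by_cases hk : 0 < (k : ℕ) ∧ (k : ℕ) < n
    · have hC : (1 : ℝ) ≤ n.choose k := Nat.one_le_cast.mpr (Nat.choose_pos k.is_le)
      calc |g (bernstein.z k) - c k / (Q * n.choose k)| ≤ 1 / (Q * n.choose k) := by
            simp only [c, if_pos hk]
            push_cast
            exact abs_sub_floor_add_one_div_le (hg _) (by positivity)
        _ ≤ 1 / Q := one_div_le_one_div_of_le hQpos (le_mul_of_one_le_right hQpos.le hC)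
        _ ≤ ε / 2 := by
            rw [div_le_iff₀ hQpos]
            rw [div_lt_iff₀ hε] at hQ
            linarith
    · obtain rfl | rfl : k = 0 ∨ k = Fin.last n := by
        rw [Fin.ext_iff, Fin.ext_iff, Fin.val_zero, Fin.val_last]; omega
      · simpa [c, hg₀] using (half_pos hε).le
      · simpa [c, hg₁, show n ≠ 0 by omega] using (half_pos hε).le
  refine ⟨n, Q, c, by exact_mod_cast hQpos, ⟨⟨1, by omega⟩, ?_⟩, fun k hk => ?_, fun x => ?_⟩
  · simp only [c]
    rw [if_pos ⟨Nat.one_pos, hn⟩]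
    exact Nat.succ_pos _
  · by_contra h
    simp only [c, if_neg h, lt_self_iff_false] at hk
  · simpa using hbern _ _ hc_coeff x

lemma bernstein_sigmoid {n k : ℕ} (hk : k ≤ n) (β : ℝ) :
    bernstein n k (unitInterval.sigmoid β) =
      n.choose k * Real.exp β ^ k / (1 + Real.exp β) ^ n := by
  have h₁ : 1 - Real.sigmoid β = (1 + Real.exp β)⁻¹ := by
    rw [← Real.sigmoid_neg, Real.sigmoid_def, neg_neg]
  have h₂ : Real.sigmoid β = Real.exp β * (1 + Real.exp β)⁻¹ := by
    rw [Real.sigmoid_def, Real.exp_neg]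
    field_simp
    ring
  rw [bernstein_apply]
  change _ * Real.sigmoid β ^ k * (1 - Real.sigmoid β) ^ (n - k) = _
  rw [h₁, h₂, mul_pow, mul_assoc, mul_assoc, ← pow_add, Nat.add_sub_cancel' hk, inv_pow,
    div_eq_mul_inv, mul_assoc]

lemma exp_natCast_rpow (k : ℕ) (β : ℝ) : Real.exp k ^ β = Real.exp β ^ k := by
  rw [← Real.exp_mul, Real.exp_nat_mul]

lemma sum_mul_choose_mul_exp_pow (n : ℕ) (q w : ℝ) :
    ∑ k : Fin (n + 1), q * n.choose k * w ^ (k : ℕ) = q * (1 + w) ^ n := by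
  rw [add_comm 1 w, add_pow, Finset.mul_sum, ← Fin.sum_univ_eq_sum_range]
  refine Finset.sum_congr rfl fun k _ => ?_
  rw [one_pow]
  ring

lemma sum_mul_exp_rpow_div_eq_sum_mul_bernstein (n : ℕ) (q : ℝ) (c : Fin (n + 1) → ℝ) (β : ℝ) :
    (∑ k : Fin (n + 1), c k * Real.exp k ^ β) /
        (∑ k : Fin (n + 1), q * n.choose k * Real.exp k ^ β) =
      ∑ k, c k / (q * n.choose k) * bernstein n k (unitInterval.sigmoid β) := by
  simp only [exp_natCast_rpow]
  rw [sum_mul_choose_mul_exp_pow, Finset.sum_div]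
  refine Finset.sum_congr rfl fun k _ => ?_
  have hC : (n.choose k : ℝ) ≠ 0 := Nat.cast_ne_zero.mpr (Nat.choose_pos k.is_le).ne'
  rw [bernstein_sigmoid k.is_le]
  rcases eq_or_ne q 0 with rfl | hq
  · simp
  · field_simp

theorem exists_nat_coeffs_bernstein_sigmoid_approx {f : ℝ → ℝ} (hf : Continuous f)
    (hf_nonneg : ∀ x, 0 ≤ f x) (hf_zero : Tendsto f (cocompact ℝ) (𝓝 0)) {ε : ℝ} (hε : 0 < ε) :
    ∃ (n Q : ℕ) (c : Fin (n + 1) → ℕ), 0 < Q ∧ (∃ k, 0 < c k) ∧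
      (∀ k, 0 < c k → 0 < (k : ℕ) ∧ (k : ℕ) < n) ∧
      ∀ β, |f β - ∑ k, (c k : ℝ) / (Q * n.choose k) * bernstein n k (unitInterval.sigmoid β)|
        ≤ ε := by
  let g : C(I, ℝ) := ⟨Function.extend unitInterval.sigmoid f 0,
    unitInterval.isOpenEmbedding_sigmoid.continuous_extend_zero hf hf_zero⟩
  have hg₀ : g 0 = 0 :=
    Function.extend_apply' _ _ _ fun ⟨β, hβ⟩ => (unitInterval.sigmoid_pos β).ne' hβ
  have hg₁ : g 1 = 0 :=
    Function.extend_apply' _ _ _ fun ⟨β, hβ⟩ => (unitInterval.sigmoid_lt_one β).ne hβ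
  obtain ⟨n, Q, c, hQ, hc_pos, hc, happrox⟩ := exists_nat_coeffs_bernstein_approx g
    (Function.extend_nonneg (g := f) hf_nonneg le_rfl ·) hg₀ hg₁ hε
  refine ⟨n, Q, c, hQ, hc_pos, hc, fun β => ?_⟩
  rw [← unitInterval.sigmoid_injective.extend_apply f 0 β]
  exact happrox _

/-- **Lemma on the class 𝓡.** The functions
`β ↦ (Σᵢ aᵢ^β)/(Σⱼ bⱼ^β)` with `max bⱼ > max aᵢ` and `min bⱼ < min aᵢ` are uniformly
dense in `C₀(ℝ, [0,∞))`. -/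
theorem dense_rational_exponential_fractions
    (f : ℝ → ℝ) (hfcont : Continuous f) (hfpos : ∀ x, 0 ≤ f x)
    (hfzero : Tendsto f (cocompact ℝ) (nhds 0)) :
    ∀ ε > (0 : ℝ), ∃ (N M : ℕ) (a : Fin N → ℝ) (b : Fin M → ℝ),
      0 < N ∧ 0 < M ∧ (∀ i, 0 < a i) ∧ (∀ j, 0 < b j) ∧
      (∃ j, ∀ i, a i < b j) ∧ (∃ j, ∀ i, b j < a i) ∧
      ∀ β : ℝ, |f β - (∑ i, a i ^ β) / (∑ j, b j ^ β)| ≤ ε := by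
  intro ε hε
  obtain ⟨n, Q, c, hQ, ⟨k₀, hk₀⟩, hc, happrox⟩ :=
    exists_nat_coeffs_bernstein_sigmoid_approx hfcont hfpos hfzero hε
  obtain ⟨N, a, ha, ha_of, ha_sum⟩ :=
    Fin.exists_tuple_with_multiplicities c (fun k => Real.exp k)
  obtain ⟨M, b, hb, hb_of, hb_sum⟩ := Fin.exists_tuple_with_multiplicities
    (fun k : Fin (n + 1) => Q * n.choose k) (fun k => Real.exp k)
  have hd (k : Fin (n + 1)) : 0 < Q * n.choose k := Nat.mul_pos hQ (Nat.choose_pos k.is_le)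
  obtain ⟨j_max, hj_max⟩ := hb_of (Fin.last n) (hd _)
  obtain ⟨j_min, hj_min⟩ := hb_of 0 (hd _)
  refine ⟨N, M, a, b, Fin.pos_iff_nonempty.mpr ⟨(ha_of k₀ hk₀).choose⟩,
    Fin.pos_iff_nonempty.mpr ⟨j_max⟩, fun i => ?_, fun j => ?_, ⟨j_max, fun i => ?_⟩,
    ⟨j_min, fun i => ?_⟩, fun β => ?_⟩
  · obtain ⟨k, -, hk⟩ := ha i
    exact hk ▸ Real.exp_pos _
  · obtain ⟨k, -, hk⟩ := hb j
    exact hk ▸ Real.exp_pos _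
  · obtain ⟨k, hk, hak⟩ := ha i
    rw [hak, hj_max, Real.exp_lt_exp, Fin.val_last]
    exact_mod_cast (hc k hk).2
  · obtain ⟨k, hk, hak⟩ := ha i
    rw [hak, hj_min, Real.exp_lt_exp, Fin.val_zero]
    exact_mod_cast (hc k hk).1
  · rw [ha_sum (· ^ β), hb_sum (· ^ β)]
    push_cast
    rw [sum_mul_exp_rpow_div_eq_sum_mul_bernstein]
    exact happrox β
end

section
/- Let F₂ be the free group freely generated by a and b. Then the elements g₁ = a⁴, g₂ = b⁴, k₁ = ab, and k₂ = ba freely generate a free subgroup of F₂ of rank 4. -/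
/-!
Sanov's representation `a ↦ !![1, 2; 0, 1]`, `b ↦ !![1, 0; 2, 1]` sends `a⁴, b⁴, ab, ba` to
`!![1, 8; 0, 1]`, `!![1, 0; 8, 1]`, `!![5, 2; 2, 1]`, `!![1, 2; 2, 5]`. Acting on nonzero integer
vectors, i.e. on slopes, each of these maps everything outside a small "repelling" interval of
slopes into a small "attracting" one, and the eight intervals are pairwise disjoint. By the
ping-pong lemma the four matrices freely generate a free subgroup of `SL(2, ℤ)`, and freeness pulls
back along the representation to `F₂`.
-/

open Function Matrix Pointwise MatrixGroups

def SubMulAction.nonzero (G M : Type*) [Group G] [AddMonoid M] [DistribMulAction G M] :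
    SubMulAction G M where
  carrier := {v | v ≠ 0}
  smul_mem' g _ hv := (smul_ne_zero_iff_ne g).2 hv

@[simp]
lemma SubMulAction.mem_nonzero {G M : Type*} [Group G] [AddMonoid M] [DistribMulAction G M]
    {v : M} : v ∈ SubMulAction.nonzero G M ↔ v ≠ 0 :=
  Iff.rfl

theorem FreeGroup.injective_lift_of_injective_lift_comp {ι G H : Type*} [Group G] [Group H]
    (φ : G →* H) (f : ι → G) (h : Injective (FreeGroup.lift (φ ∘ f))) :
    Injective (FreeGroup.lift f) := by
  have hcomp : ⇑(FreeGroup.lift (φ ∘ f)) = φ ∘ FreeGroup.lift f :=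
    funext fun _ => (FreeGroup.lift_unique (φ.comp (FreeGroup.lift f)) (by simp)).symm
  exact (hcomp ▸ h).of_comp

namespace Sanov

def A : SL(2, ℤ) := ⟨!![1, 2; 0, 1], by simp [det_fin_two]⟩

def B : SL(2, ℤ) := ⟨!![1, 0; 2, 1], by simp [det_fin_two]⟩

def hom : FreeGroup (Fin 2) →* SL(2, ℤ) := FreeGroup.lift ![A, B]

lemma A_smul (v : Fin 2 → ℤ) : A • v = ![v 0 + 2 * v 1, v 1] := by
  rw [Matrix.SpecialLinearGroup.smul_def]
  ext i
  fin_cases i <;> simp [A, mulVec, dotProduct, Fin.sum_univ_two]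

lemma B_smul (v : Fin 2 → ℤ) : B • v = ![v 0, 2 * v 0 + v 1] := by
  rw [Matrix.SpecialLinearGroup.smul_def]
  ext i
  fin_cases i <;> simp [B, mulVec, dotProduct, Fin.sum_univ_two]

def players : Fin 4 → SL(2, ℤ) := ![A ^ 4, B ^ 4, A * B, B * A]

abbrev Vec : Type := SubMulAction.nonzero SL(2, ℤ) (Fin 2 → ℤ)

lemma Vec.coord_ne_zero (v : Vec) : (v : Fin 2 → ℤ) 0 ≠ 0 ∨ (v : Fin 2 → ℤ) 1 ≠ 0 := by
  by_contra! h
  exact v.2 (funext fun i => by fin_cases i <;> simp [h])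

def doubleCone (p : ℤ → ℤ → Prop) : Set Vec :=
  {v | p ((v : Fin 2 → ℤ) 0) ((v : Fin 2 → ℤ) 1) ∨ p (-(v : Fin 2 → ℤ) 0) (-(v : Fin 2 → ℤ) 1)}

lemma mem_doubleCone {p : ℤ → ℤ → Prop} {v : Vec} :
    v ∈ doubleCone p ↔
      p ((v : Fin 2 → ℤ) 0) ((v : Fin 2 → ℤ) 1) ∨ p (-(v : Fin 2 → ℤ) 0) (-(v : Fin 2 → ℤ) 1) :=
  Iff.rfl

/- In terms of the slope `y / x`, the attracting cones are `[0, 1/4)`, `[3, ∞]`, `(1/4, 9/10)`,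
`(9/10, 29/10)` and the repelling ones `(-1/3, 0)`, `(-∞, -5)`, `(-5, -7/5)`, `(-7/5, -1/3)`. -/

def attracting : Fin 4 → Set Vec :=
  ![doubleCone fun x y => 0 ≤ y ∧ 4 * y < x,
    doubleCone fun x y => 0 ≤ x ∧ 3 * x ≤ y,
    doubleCone fun x y => x < 4 * y ∧ 10 * y < 9 * x,
    doubleCone fun x y => 9 * x < 10 * y ∧ 10 * y < 29 * x]

def repelling : Fin 4 → Set Vec :=
  ![doubleCone fun x y => -x < 3 * y ∧ y < 0,
    doubleCone fun x y => 0 < x ∧ y < -5 * x,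
    doubleCone fun x y => -5 * x < y ∧ 5 * y < -7 * x,
    doubleCone fun x y => -7 * x < 5 * y ∧ 3 * y < -x]

lemma attracting_nonempty (i : Fin 4) : (attracting i).Nonempty := by
  fin_cases i
  · exact ⟨⟨![1, 0], by simp⟩, by simp [attracting, mem_doubleCone]⟩
  · exact ⟨⟨![0, 1], by simp⟩, by simp [attracting, mem_doubleCone]⟩
  · exact ⟨⟨![2, 1], by simp⟩, by simp [attracting, mem_doubleCone]⟩
  · exact ⟨⟨![1, 2], by simp⟩, by simp [attracting, mem_doubleCone]⟩

lemma pairwise_disjoint_attracting : Pairwise (Disjoint on attracting) := by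
  intro i j hij
  refine Set.disjoint_left.2 fun v hi hj => ?_
  fin_cases i <;> fin_cases j <;>
    simp only [attracting, mem_doubleCone, Fin.reduceFinMk, Fin.isValue, cons_val] at hi hj hij <;>
    omega

lemma pairwise_disjoint_repelling : Pairwise (Disjoint on repelling) := by
  intro i j hij
  refine Set.disjoint_left.2 fun v hi hj => ?_
  fin_cases i <;> fin_cases j <;>
    simp only [repelling, mem_doubleCone, Fin.reduceFinMk, Fin.isValue, cons_val] at hi hj hij <;>
    omega

lemma disjoint_attracting_repelling (i j : Fin 4) : Disjoint (attracting i) (repelling j) := by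
  refine Set.disjoint_left.2 fun v hi hj => ?_
  fin_cases i <;> fin_cases j <;>
    simp only [attracting, repelling, mem_doubleCone, Fin.reduceFinMk, Fin.isValue, cons_val]
      at hi hj <;>
    omega

lemma players_smul_mem_attracting {i : Fin 4} {v : Vec} (hv : v ∉ repelling i) :
    players i • v ∈ attracting i := by
  have := v.coord_ne_zero
  fin_cases i <;>
    simp only [players, attracting, repelling, mem_doubleCone, Fin.reduceFinMk, Fin.isValue,
      cons_val, pow_succ, pow_zero, one_mul, mul_smul, SetLike.val_smul, A_smul, B_smul]
      at hv ⊢ <;>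
    omega

lemma mem_repelling_of_players_smul_notMem {i : Fin 4} {v : Vec}
    (hv : players i • v ∉ attracting i) : v ∈ repelling i := by
  have := v.coord_ne_zero
  fin_cases i <;>
    simp only [players, attracting, repelling, mem_doubleCone, Fin.reduceFinMk, Fin.isValue,
      cons_val, pow_succ, pow_zero, one_mul, mul_smul, SetLike.val_smul, A_smul, B_smul]
      at hv ⊢ <;>
    omega

lemma smul_compl_repelling_subset (i : Fin 4) : players i • (repelling i)ᶜ ⊆ attracting i :=
  Set.smul_set_subset_iff.2 fun _ => players_smul_mem_attracting

lemma inv_smul_compl_attracting_subset (i : Fin 4) :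
    players⁻¹ i • (attracting i)ᶜ ⊆ repelling i :=
  Set.smul_set_subset_iff.2 fun v hv =>
    mem_repelling_of_players_smul_notMem (by rwa [Pi.inv_apply, smul_inv_smul])

end Sanov

open Sanov in
/-- In the free group on two generators `a, b`, the elements
`a⁴, b⁴, ab, ba` freely generate a free subgroup of rank 4. -/
theorem free_four_elements :
    Function.Injective
      (FreeGroup.lift (fun i : Fin 4 =>
        ![(FreeGroup.of (0 : Fin 2)) ^ 4,
          (FreeGroup.of (1 : Fin 2)) ^ 4,
          FreeGroup.of (0 : Fin 2) * FreeGroup.of (1 : Fin 2),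
          FreeGroup.of (1 : Fin 2) * FreeGroup.of (0 : Fin 2)] i)) := by
  refine FreeGroup.injective_lift_of_injective_lift_comp hom _ ?_
  convert FreeGroup.injective_lift_of_ping_pong players attracting repelling attracting_nonempty
    pairwise_disjoint_attracting pairwise_disjoint_repelling disjoint_attracting_repelling
    smul_compl_repelling_subset inv_smul_compl_attracting_subset using 3
  funext i
  fin_cases i <;> simp [hom, players]
end

section
/- Let p be an odd prime and Z = SL(2, ℤ_p), the special linear group over the p-adic integers with its profinite topology. Let g₁ = [[1,8],[0,1]] and g₂ = [[1,0],[8,1]] (namely a⁴ and b⁴ for a = [[1,2],[0,1]], b = [[1,0],[2,1]]). Then the subgroup generated by g₁ and g₂ is dense in Z. -/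
/-- The subspace topology on `SL(n, R)` induced from the space of matrices. -/
instance specialLinearGroupTopology {n R : Type*} [DecidableEq n] [Fintype n]
    [CommRing R] [TopologicalSpace R] :
    TopologicalSpace (Matrix.SpecialLinearGroup n R) :=
  TopologicalSpace.induced (fun g => (g : Matrix n n R)) inferInstance

/-!
The closure `H` of `⟨g₁, g₂⟩` is a closed subgroup. Since `ℤ` is dense in `ℤ_p`, the continuous
map `t ↦ [[1, 8t], [0, 1]]` sends `ℤ_p` into `H`, and as `8` is a unit of `ℤ_p` this gives all
of `[[1, t], [0, 1]]`, and likewise all of `[[1, 0], [t, 1]]`. These transvections generate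
`SL(2, R)` over any local ring `R`: if the corner entry `a` of `g` is a unit, `g` is an explicit
product of four of them; otherwise `c` is a unit, and `[[1, 1], [0, 1]] * g` has the unit
corner entry `a + c`.
-/

open Matrix

-- Mathlib's instance is about its own topology on `SL n R`, which is definitionally but not
-- syntactically `specialLinearGroupTopology`, so instance search does not find it.
instance {n R : Type*} [DecidableEq n] [Fintype n] [CommRing R] [TopologicalSpace R]
    [IsTopologicalRing R] : IsTopologicalGroup (SpecialLinearGroup n R) :=
  SpecialLinearGroup.topologicalGroup

theorem PadicInt.isUnit_natCast_iff {p : ℕ} [Fact p.Prime] {k : ℕ} :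
    IsUnit (k : ℤ_[p]) ↔ p.Coprime k := by
  rw [isUnit_iff, norm_natCast_eq_one_iff]

namespace Matrix.SpecialLinearGroup

section transvection

variable {n R : Type*} [DecidableEq n] [Fintype n] [CommRing R] {i j : n} (hij : i ≠ j)

theorem transvection_intCast_mul (k : ℤ) (b : R) :
    transvection hij (k * b) = transvection hij b ^ k := by
  induction k using Int.induction_on with
  | zero => simp
  | succ k ih => rw [_root_.zpow_add_one, ← ih, ← transvection_add]; push_cast; ring_nf
  | pred k ih =>
    rw [_root_.zpow_sub_one, ← ih, eq_mul_inv_iff_mul_eq, ← transvection_add]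
    push_cast; ring_nf

theorem continuous_transvection [TopologicalSpace R] [ContinuousAdd R] :
    Continuous (transvection (F := R) hij) := by
  refine continuous_induced_rng.2 ?_
  simp only [Function.comp_def, transvection_coe, single_eq_of_single_single]
  exact continuous_const.add
    ((continuous_single (A := fun _ => n → R) i).comp (continuous_single (A := fun _ => R) j))

theorem transvection_mem_of_isUnit [TopologicalSpace R] [ContinuousAdd R] [ContinuousMul R]
    (hR : DenseRange (Int.cast : ℤ → R)) {H : Subgroup (SpecialLinearGroup n R)}
    (hH : IsClosed (H : Set (SpecialLinearGroup n R))) {a : R} (ha : IsUnit a)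
    (haH : transvection hij a ∈ H) (b : R) : transvection hij b ∈ H := by
  obtain ⟨u, rfl⟩ := ha
  have hb : b = b * ↑u⁻¹ * u := by simp [mul_assoc]
  rw [hb]
  refine hR.induction_on (p := fun s => transvection hij (s * u) ∈ H) (b * ↑u⁻¹)
    (hH.preimage ((continuous_transvection hij).comp (continuous_mul_const _))) fun k => ?_
  simpa only [transvection_intCast_mul] using H.zpow_mem haH k

end transvection

def elementarySubgroup (n R : Type*) [DecidableEq n] [Fintype n] [CommRing R] :
    Subgroup (SpecialLinearGroup n R) :=
  Subgroup.closure {g | ∃ (i j : n) (hij : i ≠ j) (b : R), transvection hij b = g}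

section elementarySubgroup

variable {n R : Type*} [DecidableEq n] [Fintype n] [CommRing R]

theorem transvection_mem_elementarySubgroup {i j : n} (hij : i ≠ j) (b : R) :
    transvection hij b ∈ elementarySubgroup n R :=
  Subgroup.subset_closure ⟨i, j, hij, b, rfl⟩

theorem elementarySubgroup_le {H : Subgroup (SpecialLinearGroup n R)}
    (h : ∀ (i j : n) (hij : i ≠ j) (b : R), transvection hij b ∈ H) :
    elementarySubgroup n R ≤ H :=
  (Subgroup.closure_le _).2 fun _ ⟨i, j, hij, b, hg⟩ => hg ▸ h i j hij b

theorem transvection_zero_one_coe (h : (0 : Fin 2) ≠ 1) (b : R) :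
    (transvection h b : Matrix (Fin 2) (Fin 2) R) = !![1, b; 0, 1] := by
  ext i j; fin_cases i <;> fin_cases j <;> simp [transvection_coe]

theorem transvection_one_zero_coe (h : (1 : Fin 2) ≠ 0) (b : R) :
    (transvection h b : Matrix (Fin 2) (Fin 2) R) = !![1, 0; b, 1] := by
  ext i j; fin_cases i <;> fin_cases j <;> simp [transvection_coe]

theorem mem_elementarySubgroup_of_isUnit {g : SpecialLinearGroup (Fin 2) R}
    (hg : IsUnit (g 0 0)) : g ∈ elementarySubgroup (Fin 2) R := by
  revert hg
  refine fin_two_induction (fun g => IsUnit (g 0 0) → g ∈ elementarySubgroup (Fin 2) R)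
    (fun a b c d hdet ha => ?_) g
  obtain ⟨u, hu⟩ : IsUnit a := ha
  have hinv : a * ↑u⁻¹ = 1 := by simp [← hu]
  set U := transvection (zero_ne_one : (0 : Fin 2) ≠ 1) (F := R)
  set L := transvection (one_ne_zero : (1 : Fin 2) ≠ 0) (F := R)
  -- `L x * U y * L 1 * U z = !![1 + y, (1 + y) * z + y; (1 + y) * x + 1, _]`: its first row and
  -- column match those of `g` after dividing by `a`, and then the determinant fixes the last entry.
  have hfactor : ⟨!![a, b; c, d], by rwa [det_fin_two_of]⟩ =
      L (↑u⁻¹ * (c - 1)) * U (a - 1) * L 1 * U (↑u⁻¹ * (b - a + 1)) := by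
    ext i j
    fin_cases i <;> fin_cases j <;>
      simp [U, L, transvection_zero_one_coe, transvection_one_zero_coe]
    · linear_combination -(b - a + 1) * hinv
    · linear_combination -(c - 1) * hinv
    · linear_combination -(↑u⁻¹ * (c - 1) * (b - a + 1) + d - 1) * hinv + ↑u⁻¹ * hdet
  rw [hfactor]
  repeat' apply mul_mem
  all_goals exact transvection_mem_elementarySubgroup _ _

open IsLocalRing in
theorem elementarySubgroup_fin_two_eq_top [IsLocalRing R] :
    elementarySubgroup (Fin 2) R = ⊤ := by
  refine eq_top_iff.2 fun g _ => ?_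
  by_cases hg : IsUnit (g 0 0)
  · exact mem_elementarySubgroup_of_isUnit hg
  have hdet : g 0 0 * g 1 1 - g 0 1 * g 1 0 = 1 := by rw [← det_fin_two, det_coe]
  have hc : g 1 0 ∉ maximalIdeal R := fun hc => (mem_maximalIdeal _).1
    (hdet ▸ sub_mem (Ideal.mul_mem_right _ _ hg) (Ideal.mul_mem_left _ _ hc)) isUnit_one
  have hac : IsUnit (g 0 0 + g 1 0) := by
    by_contra hac
    exact hc (by simpa using sub_mem (show g 0 0 + g 1 0 ∈ maximalIdeal R from hac) hg)
  set U := transvection (zero_ne_one : (0 : Fin 2) ≠ 1) (F := R)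
  have hUg : (U 1 * g) 0 0 = g 0 0 + g 1 0 := by
    simp [U, transvection_zero_one_coe, mul_apply, Fin.sum_univ_two]
  have hUg_mem := mem_elementarySubgroup_of_isUnit (hUg ▸ hac)
  have hg_mem := mul_mem (inv_mem (transvection_mem_elementarySubgroup _ 1 : U 1 ∈ _)) hUg_mem
  rwa [inv_mul_cancel_left] at hg_mem

end elementarySubgroup

end Matrix.SpecialLinearGroup

open SpecialLinearGroup

/-- For an odd prime `p`, the subgroup of `SL(2, ℤ_p)` generated by
`[[1,8],[0,1]] = a⁴` and `[[1,0],[8,1]] = b⁴` is dense. -/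
theorem dense_subgroup_SL2_padic
    (p : ℕ) [Fact p.Prime] (hp : p ≠ 2)
    (g₁ g₂ : Matrix.SpecialLinearGroup (Fin 2) ℤ_[p])
    (hg₁ : (g₁ : Matrix (Fin 2) (Fin 2) ℤ_[p]) = !![1, 8; 0, 1])
    (hg₂ : (g₂ : Matrix (Fin 2) (Fin 2) ℤ_[p]) = !![1, 0; 8, 1]) :
    Dense (↑(Subgroup.closure {g₁, g₂}) :
      Set (Matrix.SpecialLinearGroup (Fin 2) ℤ_[p])) := by
  set S := Subgroup.closure {g₁, g₂}
  have h8 : IsUnit (8 : ℤ_[p]) := by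
    exact_mod_cast PadicInt.isUnit_natCast_iff.2
      (((Nat.coprime_primes Fact.out Nat.prime_two).2 hp).pow_right 3)
  have hE : elementarySubgroup (Fin 2) ℤ_[p] ≤ S.topologicalClosure := by
    refine elementarySubgroup_le fun i j hij b =>
      transvection_mem_of_isUnit hij PadicInt.denseRange_intCast
        S.isClosed_topologicalClosure h8 (S.le_topologicalClosure (Subgroup.subset_closure ?_)) b
    fin_cases i <;> fin_cases j
    · exact absurd rfl hij
    · exact .inl (Subtype.ext ((transvection_zero_one_coe _ 8).trans hg₁.symm))
    · exact .inr (Subtype.ext ((transvection_one_zero_coe _ 8).trans hg₂.symm))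
    · exact absurd rfl hij
  have hS : S.topologicalClosure = ⊤ := top_unique (elementarySubgroup_fin_two_eq_top.ge.trans hE)
  rw [dense_iff_closure_eq, ← Subgroup.topologicalClosure_coe, hS, Subgroup.coe_top]
end

section
/- Let Γ act freely on a compact metrizable space Z with a unique invariant probability measure μ, and suppose Γ₀ ⊆ Γ is a subgroup such that Γ₀ ↷ Z is minimal with unique invariant measure μ. Let π : Γ → G be a surjective group homomorphism with Γ₀ ⊆ ker π, let G act on a compact metrizable space X, and let Γ act diagonally on Z × X by g·(z,x) = (g·z, π(g)·x). If G ↷ X is minimal, then Γ ↷ Z × X is minimal. -/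
/-!
Because `Γ₀` lies in `ker π`, it moves only the `Z`-coordinate, and it does so minimally: the
closure of the `Γ`-orbit of `(z, x)` therefore contains the whole fibre `Z × {π g • x}` for every
`g`. These fibres fill `Z × (G • x)`, which is dense since `π` is onto and `G ↷ X` is minimal.
-/

open MeasureTheory Set

theorem Dense.of_univ_prod_subset_closure {Z X : Type*} [TopologicalSpace Z] [TopologicalSpace X]
    {s : Set (Z × X)} {A : Set X} (hA : Dense A) (h : (univ : Set Z) ×ˢ A ⊆ closure s) :
    Dense s :=
  dense_closure.mp ((dense_univ.prod hA).mono h)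

theorem univ_prod_subset_closure_diagonal_orbit {Γ G Z X : Type*} [Group Γ] [Group G]
    [TopologicalSpace Z] [TopologicalSpace X] [MulAction Γ Z] [MulAction G X]
    (Γ₀ : Subgroup Γ) (hΓ₀min : ∀ z : Z, Dense {w : Z | ∃ γ ∈ Γ₀, γ • z = w})
    (π : Γ →* G) (hker : Γ₀ ≤ π.ker) (z : Z) (x : X) :
    (univ : Set Z) ×ˢ {y : X | ∃ g : Γ, π g • x = y} ⊆
      closure {q : Z × X | ∃ g : Γ, (g • z, π g • x) = q} := by
  rintro ⟨w, _⟩ ⟨-, g, rfl⟩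
  have hfibre : {v : Z | ∃ γ ∈ Γ₀, γ • g • z = v} ×ˢ {π g • x} ⊆
      {q : Z × X | ∃ g : Γ, (g • z, π g • x) = q} := by
    rintro ⟨_, _⟩ ⟨⟨γ, hγ, rfl⟩, rfl⟩
    exact ⟨γ * g, by simp [mul_smul, MonoidHom.mem_ker.mp (hker hγ)]⟩
  refine closure_mono hfibre ?_
  rw [closure_prod_eq]
  exact ⟨hΓ₀min (g • z) w, subset_closure rfl⟩

theorem diagonal_action_minimal_general
    {Γ G Z X : Type*} [Group Γ] [Group G]
    [TopologicalSpace Z] [TopologicalSpace X] [MulAction Γ Z] [MulAction G X]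
    (Γ₀ : Subgroup Γ)
    (hΓ₀min : ∀ z : Z, Dense {w : Z | ∃ γ ∈ Γ₀, γ • z = w})
    (π : Γ →* G) (hπ : Function.Surjective π) (hker : Γ₀ ≤ π.ker)
    (hGmin : ∀ x : X, Dense {y : X | ∃ g : G, g • x = y}) :
    ∀ p : Z × X, Dense {q : Z × X | ∃ g : Γ, (g • p.1, π g • p.2) = q} := by
  intro p
  have hdense : Dense {y : X | ∃ g : Γ, π g • p.2 = y} := by
    simpa only [hπ.exists] using hGmin p.2
  exact hdense.of_univ_prod_subset_closure
    (univ_prod_subset_closure_diagonal_orbit Γ₀ hΓ₀min π hker p.1 p.2)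

/-- Let `Γ` act freely on compact metrizable `Z` with unique invariant
probability measure `μ`, and let `Γ₀ ≤ Γ` act minimally on `Z` with the same unique
invariant measure. Let `π : Γ → G` be surjective with `Γ₀ ≤ ker π`, `G` acting on `X`.
If `G ↷ X` is minimal, then the diagonal action `g·(z,x) = (g·z, π(g)·x)` of `Γ` on
`Z × X` is minimal. -/
theorem diagonal_action_minimal
    {Γ G Z X : Type*} [Group Γ] [Group G]
    [TopologicalSpace Z] [CompactSpace Z] [TopologicalSpace.MetrizableSpace Z]
    [MeasurableSpace Z] [BorelSpace Z]
    [TopologicalSpace X] [CompactSpace X] [TopologicalSpace.MetrizableSpace X]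
    [MulAction Γ Z] [ContinuousConstSMul Γ Z]
    [MulAction G X] [ContinuousConstSMul G X]
    (hfree : ∀ g : Γ, g ≠ 1 → ∀ z : Z, g • z ≠ z)
    (μ : Measure Z) [IsProbabilityMeasure μ]
    (hμinv : ∀ g : Γ, Measure.map (fun z => g • z) μ = μ)
    (hμuniq : ∀ ν : Measure Z, IsProbabilityMeasure ν →
      (∀ g : Γ, Measure.map (fun z => g • z) ν = ν) → ν = μ)
    (Γ₀ : Subgroup Γ)
    (hΓ₀min : ∀ z : Z, Dense {w : Z | ∃ γ ∈ Γ₀, γ • z = w})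
    (hΓ₀uniq : ∀ ν : Measure Z, IsProbabilityMeasure ν →
      (∀ γ ∈ Γ₀, Measure.map (fun z => γ • z) ν = ν) → ν = μ)
    (π : Γ →* G) (hπ : Function.Surjective π) (hker : Γ₀ ≤ π.ker)
    (hGmin : ∀ x : X, Dense {y : X | ∃ g : G, g • x = y}) :
    ∀ p : Z × X, Dense {q : Z × X | ∃ g : Γ, (g • p.1, π g • p.2) = q} :=
  diagonal_action_minimal_general Γ₀ hΓ₀min π hπ hker hGmin
end

section
/- In the setting of the previous lemma (Γ ↷ Z uniquely ergodic with invariant measure μ, Γ₀ ⊆ ker π acting minimally and uniquely ergodically on Z, π : Γ → G surjective, G ↷ X, diagonal action on Z × X), let Ω : G × X → ℝ be a continuous 1-cocycle and define Ω₁(g,(z,x)) = Ω(π(g), x). Then Ω₁ is a continuous 1-cocycle for Γ ↷ Z × X, and for each β ∈ ℝ the e^{β·Ω₁}-conformal probability measures on Z × X are exactly the measures μ × ν where ν is an e^{β·Ω}-conformal probability measure on X. In particular the two KMS spectra coincide. -/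
/-!
Since `Γ₀ ⊆ ker π` and `Ω (1, ·) = 0`, conformality of `η` at an element `γ ∈ Γ₀` says exactly
that `η` is invariant under `γ × id`. For measurable `t ⊆ X` the measure `s ↦ η (s ×ˢ t)` on `Z`
is then `Γ₀`-invariant, so unique ergodicity of `Γ₀` makes it `η (Z ×ˢ t) • μ`: thus `η` is the
product of `μ` with its second marginal, which inherits conformality. Conversely, Fubini with
conformality of `ν` in the inner integral and `Γ`-invariance of `μ` in the outer one shows that
`μ.prod ν` is conformal.
-/

open MeasureTheory

/-- Conformality on `Z × X` for the diagonal `Γ`-action `g·(z,x) = (g·z, π(g)·x)` with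
cocycle `Ω₁(g,(z,x)) = Ω(π(g),x)`. -/
def ConformalMeasureDiag {Γ G Z X : Type*} [Group Γ] [Group G]
    [TopologicalSpace Z] [MeasurableSpace Z] [TopologicalSpace X] [MeasurableSpace X]
    [MulAction Γ Z] [MulAction G X]
    (π : Γ →* G) (Ω : G → X → ℝ) (β : ℝ) (η : Measure (Z × X)) : Prop :=
  ∀ g : Γ, ∀ f : C(Z × X, ℝ),
    ∫ p, f (g • p.1, π g • p.2) * Real.exp (β * Ω (π g) p.2) ∂η = ∫ p, f p ∂η

section UniqueErgodicity

variable {M Z X : Type*} [SMul M Z] [MeasurableSpace Z] [MeasurableSpace X]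
  {S : Set M} {μ : Measure Z}

theorem eq_measure_univ_smul_of_forall_map_smul_eq
    (huniq : ∀ ν : Measure Z, IsProbabilityMeasure ν →
      (∀ γ ∈ S, Measure.map (fun z => γ • z) ν = ν) → ν = μ)
    (κ : Measure Z) [IsFiniteMeasure κ]
    (hκ : ∀ γ ∈ S, Measure.map (fun z => γ • z) κ = κ) :
    κ = κ Set.univ • μ := by
  rcases eq_zero_or_neZero κ with rfl | _
  · simp
  have hμ : (κ Set.univ)⁻¹ • κ = μ :=
    huniq _ inferInstance fun γ hγ => by rw [Measure.map_smul, hκ γ hγ]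
  rw [← hμ, smul_smul, ENNReal.mul_inv_cancel (NeZero.ne _) (measure_ne_top _ _), one_smul]

theorem eq_prod_map_snd_of_forall_map_smul_fst_eq [MeasurableConstSMul M Z] [SigmaFinite μ]
    (huniq : ∀ ν : Measure Z, IsProbabilityMeasure ν →
      (∀ γ ∈ S, Measure.map (fun z => γ • z) ν = ν) → ν = μ)
    (η : Measure (Z × X)) [IsFiniteMeasure η]
    (hη : ∀ γ ∈ S, Measure.map (fun p : Z × X => (γ • p.1, p.2)) η = η) :
    η = μ.prod (η.map Prod.snd) := by
  refine (Measure.prod_eq fun s t hs ht => ?_).symm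
  set κ := (η.restrict (Prod.snd ⁻¹' t)).map Prod.fst
  have hκ_apply : ∀ s, MeasurableSet s → κ s = η (s ×ˢ t) := fun s hs => by
    rw [Measure.map_apply measurable_fst hs, Measure.restrict_apply (measurable_fst hs),
      Set.prod_eq]
  have hκ_inv : ∀ γ ∈ S, Measure.map (fun z => γ • z) κ = κ := by
    intro γ hγ
    have hT : Measurable fun p : Z × X => (γ • p.1, p.2) :=
      (measurable_fst.const_smul γ).prodMk measurable_snd
    calc Measure.map (fun z => γ • z) κ
        = ((η.map fun p : Z × X => (γ • p.1, p.2)).restrict (Prod.snd ⁻¹' t)).map Prod.fst := by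
          rw [Measure.restrict_map hT (measurable_snd ht), Measure.map_map measurable_fst hT,
            Measure.map_map (measurable_const_smul γ) measurable_fst]
          rfl
      _ = κ := by rw [hη γ hγ]
  calc η (s ×ˢ t) = κ s := (hκ_apply s hs).symm
    _ = κ Set.univ * μ s := by
      conv_lhs => rw [eq_measure_univ_smul_of_forall_map_smul_eq huniq κ hκ_inv]
      rfl
    _ = μ s * η.map Prod.snd t := by
      rw [hκ_apply _ MeasurableSet.univ, Set.univ_prod, Measure.map_apply measurable_snd ht,
        mul_comm]

end UniqueErgodicity

section Diagonal

variable {Γ G Z X : Type*} [Group Γ] [Group G]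
  [TopologicalSpace Z] [MeasurableSpace Z]
  [TopologicalSpace X] [MeasurableSpace X] [BorelSpace X]
  [MulAction Γ Z] [MulAction G X] {π : Γ →* G} {Ω : G → X → ℝ} {β : ℝ}

theorem ConformalMeasureDiag.map_smul_fst_eq_of_mem_ker
    [TopologicalSpace.PseudoMetrizableSpace Z] [SecondCountableTopology Z] [BorelSpace Z]
    [TopologicalSpace.PseudoMetrizableSpace X] [ContinuousConstSMul Γ Z]
    {η : Measure (Z × X)} [IsFiniteMeasure η] (hη : ConformalMeasureDiag π Ω β η)
    (hΩ₁ : ∀ x, Ω 1 x = 0) {γ : Γ} (hγ : γ ∈ π.ker) :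
    Measure.map (fun p : Z × X => (γ • p.1, p.2)) η = η := by
  have hT : Continuous fun p : Z × X => (γ • p.1, p.2) :=
    (continuous_fst.const_smul γ).prodMk continuous_snd
  refine ext_of_forall_integral_eq_of_IsFiniteMeasure fun f => ?_
  rw [integral_map hT.aemeasurable f.continuous.aestronglyMeasurable]
  simpa [MonoidHom.mem_ker.mp hγ, hΩ₁] using hη γ f.toContinuousMap

theorem ConformalMeasureDiag.conformalMeasure_map_snd [ContinuousConstSMul G X]
    {η : Measure (Z × X)} (hη : ConformalMeasureDiag π Ω β η)
    (hπ : Function.Surjective π) (hΩ : ∀ g, Continuous (Ω g)) :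
    ConformalMeasure Ω β (η.map Prod.snd) := by
  intro g f
  obtain ⟨γ, rfl⟩ := hπ g
  have hF : Continuous fun x => f (π γ • x) * Real.exp (β * Ω (π γ) x) := by fun_prop
  rw [integral_map measurable_snd.aemeasurable hF.aestronglyMeasurable,
    integral_map measurable_snd.aemeasurable f.continuous.aestronglyMeasurable]
  exact hη γ (f.comp ⟨Prod.snd, continuous_snd⟩)

theorem conformalMeasureDiag_prod [CompactSpace Z] [SecondCountableTopology Z] [BorelSpace Z]
    [CompactSpace X] [ContinuousConstSMul Γ Z] [ContinuousConstSMul G X]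
    {μ : Measure Z} [IsFiniteMeasure μ] {ν : Measure X} [IsFiniteMeasure ν]
    (hμ : ∀ g : Γ, Measure.map (fun z => g • z) μ = μ) (hΩ : ∀ g, Continuous (Ω g))
    (hν : ConformalMeasure Ω β ν) :
    ConformalMeasureDiag π Ω β (μ.prod ν) := by
  intro g f
  have hF : Continuous fun p : Z × X =>
      f (g • p.1, π g • p.2) * Real.exp (β * Ω (π g) p.2) := by fun_prop
  have hinner : ∀ z : Z, ∫ x, f (g • z, π g • x) * Real.exp (β * Ω (π g) x) ∂ν
      = ∫ x, f (g • z, x) ∂ν := fun z =>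
    hν (π g) (f.comp ⟨fun x => (g • z, x), by fun_prop⟩)
  have hμg : MeasurePreserving (fun z : Z => g • z) μ μ := ⟨measurable_const_smul g, hμ g⟩
  rw [integral_prod _ (hF.integrable_of_hasCompactSupport (.of_compactSpace _)),
    integral_prod _ (f.continuous.integrable_of_hasCompactSupport (.of_compactSpace _))]
  simp only [hinner]
  exact hμg.integral_comp (measurableEmbedding_const_smul g) fun z => ∫ x, f (z, x) ∂ν

end Diagonal

theorem conformal_measures_of_diagonal_action_general
    {Γ G Z X : Type*} [Group Γ] [Group G]
    [TopologicalSpace Z] [CompactSpace Z] [TopologicalSpace.MetrizableSpace Z]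
    [MeasurableSpace Z] [BorelSpace Z]
    [TopologicalSpace X] [CompactSpace X] [TopologicalSpace.MetrizableSpace X]
    [MeasurableSpace X] [BorelSpace X]
    [MulAction Γ Z] [ContinuousConstSMul Γ Z]
    [MulAction G X] [ContinuousConstSMul G X]
    (μ : Measure Z) [IsProbabilityMeasure μ]
    (hμinv : ∀ g : Γ, Measure.map (fun z => g • z) μ = μ)
    (Γ₀ : Subgroup Γ)
    (hΓ₀uniq : ∀ ν : Measure Z, IsProbabilityMeasure ν →
      (∀ γ ∈ Γ₀, Measure.map (fun z => γ • z) ν = ν) → ν = μ)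
    (π : Γ →* G) (hπ : Function.Surjective π) (hker : Γ₀ ≤ π.ker)
    (Ω : G → X → ℝ) (hΩcont : ∀ g : G, Continuous (Ω g))
    (hΩ : ∀ (g h : G) (x : X), Ω g (h • x) + Ω h x = Ω (g * h) x) :
    ((∀ g : Γ, Continuous fun p : Z × X => Ω (π g) p.2) ∧
      (∀ (g h : Γ) (p : Z × X),
        Ω (π g) (((h • p.1, π h • p.2) : Z × X)).2 + Ω (π h) p.2
          = Ω (π (g * h)) p.2)) ∧
    (∀ β : ℝ, ∀ η : Measure (Z × X), IsProbabilityMeasure η →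
      (ConformalMeasureDiag π Ω β η ↔
        ∃ ν : Measure X, IsProbabilityMeasure ν ∧ ConformalMeasure Ω β ν ∧
          η = μ.prod ν)) ∧
    {β : ℝ | ∃ η : Measure (Z × X), IsProbabilityMeasure η ∧
        ConformalMeasureDiag π Ω β η}
      = {β : ℝ | ∃ ν : Measure X, IsProbabilityMeasure ν ∧
          ConformalMeasure Ω β ν} := by
  have hΩ₁ : ∀ x, Ω 1 x = 0 := fun x => by simpa using hΩ 1 1 x
  have hconf : ∀ β : ℝ, ∀ η : Measure (Z × X), IsProbabilityMeasure η →
      (ConformalMeasureDiag π Ω β η ↔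
        ∃ ν : Measure X, IsProbabilityMeasure ν ∧ ConformalMeasure Ω β ν ∧
          η = μ.prod ν) := by
    intro β η _
    constructor
    · intro hη
      refine ⟨η.map Prod.snd, Measure.isProbabilityMeasure_map measurable_snd.aemeasurable,
        hη.conformalMeasure_map_snd hπ hΩcont, ?_⟩
      exact eq_prod_map_snd_of_forall_map_smul_fst_eq hΓ₀uniq η fun γ hγ =>
        hη.map_smul_fst_eq_of_mem_ker hΩ₁ (hker hγ)
    · rintro ⟨ν, _, hν, rfl⟩
      exact conformalMeasureDiag_prod hμinv hΩcont hν
  refine ⟨⟨fun g => (hΩcont (π g)).comp continuous_snd,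
    fun g h p => by simpa using hΩ (π g) (π h) p.2⟩, hconf, ?_⟩
  ext β
  constructor
  · rintro ⟨η, _, hη⟩
    obtain ⟨ν, hν, hνconf, -⟩ := (hconf β η ‹_›).mp hη
    exact ⟨ν, hν, hνconf⟩
  · rintro ⟨ν, _, hνconf⟩
    exact ⟨μ.prod ν, inferInstance, (hconf β _ inferInstance).mpr ⟨ν, ‹_›, hνconf, rfl⟩⟩

/-- In the setting of Lemma `diagonal_action_minimal`, with a continuous
1-cocycle `Ω : G × X → ℝ` and `Ω₁(g,(z,x)) = Ω(π(g),x)`: the map `Ω₁` is a continuous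
1-cocycle for the diagonal action, and for every `β` the `e^{β·Ω₁}`-conformal probability
measures on `Z × X` are exactly the products `μ × ν` with `ν` an `e^{β·Ω}`-conformal
probability measure; in particular the two KMS spectra coincide. -/
theorem conformal_measures_of_diagonal_action
    {Γ G Z X : Type*} [Group Γ] [Group G]
    [TopologicalSpace Z] [CompactSpace Z] [TopologicalSpace.MetrizableSpace Z]
    [MeasurableSpace Z] [BorelSpace Z]
    [TopologicalSpace X] [CompactSpace X] [TopologicalSpace.MetrizableSpace X]
    [MeasurableSpace X] [BorelSpace X]
    [MulAction Γ Z] [ContinuousConstSMul Γ Z]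
    [MulAction G X] [ContinuousConstSMul G X]
    (hfree : ∀ g : Γ, g ≠ 1 → ∀ z : Z, g • z ≠ z)
    (μ : Measure Z) [IsProbabilityMeasure μ]
    (hμinv : ∀ g : Γ, Measure.map (fun z => g • z) μ = μ)
    (hμuniq : ∀ ν : Measure Z, IsProbabilityMeasure ν →
      (∀ g : Γ, Measure.map (fun z => g • z) ν = ν) → ν = μ)
    (Γ₀ : Subgroup Γ)
    (hΓ₀min : ∀ z : Z, Dense {w : Z | ∃ γ ∈ Γ₀, γ • z = w})
    (hΓ₀uniq : ∀ ν : Measure Z, IsProbabilityMeasure ν →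
      (∀ γ ∈ Γ₀, Measure.map (fun z => γ • z) ν = ν) → ν = μ)
    (π : Γ →* G) (hπ : Function.Surjective π) (hker : Γ₀ ≤ π.ker)
    (Ω : G → X → ℝ) (hΩcont : ∀ g : G, Continuous (Ω g))
    (hΩ : ∀ (g h : G) (x : X), Ω g (h • x) + Ω h x = Ω (g * h) x) :
    ((∀ g : Γ, Continuous fun p : Z × X => Ω (π g) p.2) ∧
      (∀ (g h : Γ) (p : Z × X),
        Ω (π g) (((h • p.1, π h • p.2) : Z × X)).2 + Ω (π h) p.2
          = Ω (π (g * h)) p.2)) ∧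
    (∀ β : ℝ, ∀ η : Measure (Z × X), IsProbabilityMeasure η →
      (ConformalMeasureDiag π Ω β η ↔
        ∃ ν : Measure X, IsProbabilityMeasure ν ∧ ConformalMeasure Ω β ν ∧
          η = μ.prod ν)) ∧
    {β : ℝ | ∃ η : Measure (Z × X), IsProbabilityMeasure η ∧
        ConformalMeasureDiag π Ω β η}
      = {β : ℝ | ∃ ν : Measure X, IsProbabilityMeasure ν ∧
          ConformalMeasure Ω β ν} :=
  conformal_measures_of_diagonal_action_general μ hμinv Γ₀ hΓ₀uniq π hπ hker Ω hΩcont hΩ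
end
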